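/- arXiv:1907.11590 — 6 statements merged into one kernel-verified Lean document; each statement's English description precedes it below -/
import Mathlib

section
/- Let G be a simple graph with no isolated vertices and M a maximal matching of G. Then V(M), the set of vertices covered by M, is a total dominating set of G. -/
open SimpleGraph

namespace TotalDomMM

variable {V : Type*}

/-- `M` is a maximal matching of `G`: a matching not contained in a larger matching. -/
def IsMaximalMatching (G : SimpleGraph V) (M : G.Subgraph) : Prop :=
  M.IsMatching ∧
    ∀ M' : G.Subgraph, M'.IsMatching → M.edgeSet ⊆ M'.edgeSet → M.edgeSet = M'.edgeSet

/-- `μ*(G)`: the minimum cardinality of a maximal matching of `G`. -/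
noncomputable def muStar (G : SimpleGraph V) : ℕ :=
  sInf {n | ∃ M : G.Subgraph, IsMaximalMatching G M ∧ M.edgeSet.ncard = n}

/-- `S` is a total dominating set of `G`: every vertex has a neighbor in `S`. -/
def IsTotalDomSet (G : SimpleGraph V) (S : Set V) : Prop :=
  ∀ v : V, ∃ u ∈ S, G.Adj v u

/-- `γ_t(G)`: the minimum cardinality of a total dominating set of `G`. -/
noncomputable def gammaT (G : SimpleGraph V) : ℕ :=
  sInf {n | ∃ S : Set V, IsTotalDomSet G S ∧ S.ncard = n}

/-- `δ(G)`: the minimum degree of `G`. -/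
noncomputable def minDeg (G : SimpleGraph V) : ℕ :=
  sInf {k | ∃ v : V, (G.neighborSet v).ncard = k}

/-- `G` has no isolated vertices. -/
def NoIsolated (G : SimpleGraph V) : Prop := ∀ v : V, ∃ u : V, G.Adj v u

/-- `sup(G)`: the set of support vertices, i.e. vertices adjacent to a leaf
(a vertex of degree one). -/
def supSet (G : SimpleGraph V) : Set V :=
  {v | ∃ u, G.Adj v u ∧ (G.neighborSet u).ncard = 1}

/-- `S⁺(G)`: support vertices adjacent to some support vertex. -/
def supPlus (G : SimpleGraph V) : Set V :=
  {v ∈ supSet G | ∃ u ∈ supSet G, G.Adj v u}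

/-- `S⁻(G) = sup(G) \ S⁺(G)`. -/
def supMinus (G : SimpleGraph V) : Set V := supSet G \ supPlus G

/-- The set of vertices covered by a set of edges. -/
def edgeVerts (E : Set (Sym2 V)) : Set V := {v | ∃ e ∈ E, v ∈ e}

/-- Conditions (i)-(ii) (minimum degree two case) for a matching `M`:
(i) for every `v ∈ V(M)`, its partner `M_p v` is the unique neighbor of `v` in `V(M)`;
(ii) distinct `u, v ∈ V(M)` with a common neighbor force a vertex whose neighborhood is
exactly `{M_p u, M_p v}`. -/
def MatchingCond (G : SimpleGraph V) (M : G.Subgraph) : Prop :=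
  (∀ v ∈ M.verts, ∀ w, M.Adj v w → ∀ u ∈ M.verts, G.Adj v u → u = w) ∧
  (∀ u v : V, u ∈ M.verts → v ∈ M.verts → u ≠ v →
    (∃ w, G.Adj u w ∧ G.Adj v w) →
    ∀ u' v' : V, M.Adj u u' → M.Adj v v' → ∃ x : V, G.neighborSet x = {u', v'})

/-- The matching `M` is partitioned as `M = M⁺ ∪ M⁻ ∪ M*` satisfying conditions (i)-(iv)
of the main theorem:
(i) `M⁺` is a perfect matching of the subgraph induced by `S⁺(G)`;
(ii) `S⁻(G) ⊆ V(M⁻)` and every edge of `M⁻` joins a vertex of `S⁻(G)` with a vertex of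
`V(G) \ sup(G)`;
(iii) for `v ∈ S⁻(G) ∪ V(M*)`, the partner `M_p v` is the unique neighbor of `v` in `V(M)`;
(iv) for distinct `u, v ∈ S⁻(G) ∪ V(M*)` with a common neighbor, some vertex has
neighborhood exactly `{M_p u, M_p v}`. -/
def PartitionCond (G : SimpleGraph V) (M : G.Subgraph) (Mp Mm Ms : Set (Sym2 V)) : Prop :=
  Mp ∪ Mm ∪ Ms = M.edgeSet ∧
  Disjoint Mp Mm ∧ Disjoint Mp Ms ∧ Disjoint Mm Ms ∧
  -- (i)
  (∀ u v : V, s(u, v) ∈ Mp → u ∈ supPlus G) ∧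
  supPlus G ⊆ edgeVerts Mp ∧
  -- (ii)
  supMinus G ⊆ edgeVerts Mm ∧
  (∀ u v : V, s(u, v) ∈ Mm →
    (u ∈ supMinus G ∧ v ∉ supSet G) ∨ (v ∈ supMinus G ∧ u ∉ supSet G)) ∧
  -- (iii)
  (∀ v ∈ supMinus G ∪ edgeVerts Ms, ∀ w, M.Adj v w → ∀ u ∈ M.verts, G.Adj v u → u = w) ∧
  -- (iv)
  (∀ u v : V, u ∈ supMinus G ∪ edgeVerts Ms → v ∈ supMinus G ∪ edgeVerts Ms → u ≠ v →
    (∃ w, G.Adj u w ∧ G.Adj v w) →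
    ∀ u' v' : V, M.Adj u u' → M.Adj v v' → ∃ x : V, G.neighborSet x = {u', v'})

/-- The graph with vertices `u, v, w_1, …, w_n` (here `u = Sum.inr 0`, `v = Sum.inr 1`,
`w_i = Sum.inl i`) and edges `uv` and `uw_i, vw_i` for all `i`: `n` triangles sharing
the common edge `uv`. -/
def kGraph (n : ℕ) : SimpleGraph (Fin n ⊕ Fin 2) :=
  SimpleGraph.fromRel (fun a b => ¬(a.isLeft = true ∧ b.isLeft = true))

/-- `G` belongs to the family `𝒦` of graphs consisting of triangles sharing a common edge. -/
def InK (G : SimpleGraph V) : Prop := ∃ n : ℕ, 1 ≤ n ∧ Nonempty (G ≃g kGraph n)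

/-- `G` is a 6-cycle. -/
def IsC6 (G : SimpleGraph V) : Prop := Nonempty (G ≃g SimpleGraph.cycleGraph 6)

/-- `a, b, c, d, e, f` (in this cyclic order) form an induced 6-cycle in `G`. -/
def IsInducedC6 (G : SimpleGraph V) (a b c d e f : V) : Prop :=
  List.Pairwise (· ≠ ·) [a, b, c, d, e, f] ∧
  G.Adj a b ∧ G.Adj b c ∧ G.Adj c d ∧ G.Adj d e ∧ G.Adj e f ∧ G.Adj f a ∧
  ¬G.Adj a c ∧ ¬G.Adj a d ∧ ¬G.Adj a e ∧
  ¬G.Adj b d ∧ ¬G.Adj b e ∧ ¬G.Adj b f ∧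
  ¬G.Adj c e ∧ ¬G.Adj c f ∧ ¬G.Adj d f

/-- `d₂(G)`: the set of vertices of degree two. -/
def d2 (G : SimpleGraph V) : Set V := {v | (G.neighborSet v).ncard = 2}

/-- `𝓜(G)`: the set of edges `uv` such that there are `x ∈ N(u) ∩ d₂(G)` and
`y ∈ N(v) ∩ d₂(G)` so that the edges `xu, uv, vy` lie on a common induced 6-cycle of `G`. -/
def mSet (G : SimpleGraph V) : Set (Sym2 V) :=
  {e | ∃ u v x y w t : V, e = s(u, v) ∧
    x ∈ G.neighborSet u ∩ d2 G ∧ y ∈ G.neighborSet v ∩ d2 G ∧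
    IsInducedC6 G x u v y w t}

theorem IsMaximalMatching.mem_verts_or_mem_verts {G : SimpleGraph V} {M : G.Subgraph}
    (hM : IsMaximalMatching G M) {u v : V} (huv : G.Adj u v) : u ∈ M.verts ∨ v ∈ M.verts := by
  by_contra! ⟨hu, hv⟩
  have hdisj : Disjoint M.support (G.subgraphOfAdj huv).support := by
    rw [hM.1.support_eq_verts, (Subgraph.IsMatching.subgraphOfAdj huv).support_eq_verts,
      subgraphOfAdj_verts]
    simp [hu, hv]
  have hedges := hM.2 _ (hM.1.sup (.subgraphOfAdj huv) hdisj)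
    (Subgraph.edgeSet_mono le_sup_left)
  have huv_mem : s(u, v) ∈ M.edgeSet := hedges ▸ by simp
  exact hu (M.edge_vert huv_mem)

/-- If `G` has no isolated vertices and `M` is a maximal matching of `G`, then `V(M)`
is a total dominating set of `G`. -/
theorem statement1 (G : SimpleGraph V) (h : NoIsolated G)
    (M : G.Subgraph) (hM : IsMaximalMatching G M) :
    IsTotalDomSet G M.verts := by
  intro v
  obtain ⟨u, hvu⟩ := h v
  rcases hM.mem_verts_or_mem_verts hvu with hv | hu
  · obtain ⟨w, hvw, -⟩ := hM.1 hv
    exact ⟨w, M.edge_vert hvw.symm, M.adj_sub hvw⟩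
  · exact ⟨u, hu, hvu⟩

end TotalDomMM
end

section
/- Let G be a finite simple graph with no isolated vertices and minimum degree δ(G) ≥ 3. Then γ_t(G) ≤ 2μ*(G) − δ(G) + 2. -/
open SimpleGraph

namespace TotalDomMM

variable {V : Type*}

/-- If `G` is a finite graph with no isolated vertices and `δ(G) ≥ 3`, then
`γ_t(G) ≤ 2 μ*(G) - δ(G) + 2`. -/
theorem statement3 [Fintype V] (G : SimpleGraph V)
    (h : NoIsolated G) (h3 : 3 ≤ minDeg G) :
    (gammaT G : ℤ) ≤ 2 * (muStar G : ℤ) - (minDeg G : ℤ) + 2 := by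
  classical
  set δ := minDeg G with hδdef
  have hdeg : ∀ v : V, δ ≤ (G.neighborSet v).ncard := fun v => Nat.sInf_le ⟨v, rfl⟩
  -- existence of a maximal matching
  have hexists : ∃ M : G.Subgraph, IsMaximalMatching G M := by
    have hne : ({n | ∃ M : G.Subgraph, M.IsMatching ∧ M.edgeSet.ncard = n}).Nonempty :=
      ⟨0, ⊥, fun v hv => absurd hv (by simp), by simp⟩
    have hbdd : BddAbove {n | ∃ M : G.Subgraph, M.IsMatching ∧ M.edgeSet.ncard = n} := by
      refine ⟨Fintype.card (Sym2 V), ?_⟩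
      rintro n ⟨M, -, rfl⟩
      calc M.edgeSet.ncard ≤ (Set.univ : Set (Sym2 V)).ncard :=
            Set.ncard_le_ncard (Set.subset_univ _) (Set.toFinite _)
        _ = Fintype.card (Sym2 V) := by rw [Set.ncard_univ, Nat.card_eq_fintype_card]
    obtain ⟨M, hM, hcard⟩ := Nat.sSup_mem hne hbdd
    refine ⟨M, hM, fun M' hM' hsub => ?_⟩
    refine Set.eq_of_subset_of_ncard_le hsub ?_ (Set.toFinite _)
    rw [hcard]
    exact le_csSup hbdd ⟨M', hM', rfl⟩
  have hmuset : {n | ∃ M : G.Subgraph, IsMaximalMatching G M ∧ M.edgeSet.ncard = n}.Nonempty := by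
    obtain ⟨M, hM⟩ := hexists
    exact ⟨M.edgeSet.ncard, M, hM, rfl⟩
  obtain ⟨M, ⟨hM, hmax⟩, hMcard⟩ :
      ∃ M : G.Subgraph, IsMaximalMatching G M ∧ M.edgeSet.ncard = muStar G :=
    Nat.sInf_mem hmuset
  -- partner function
  let p : V → V := fun v => if hv : v ∈ M.verts then (hM hv).exists.choose else v
  have hpadj : ∀ v ∈ M.verts, M.Adj v (p v) := by
    intro v hv
    simp only [p, dif_pos hv]
    exact (hM hv).exists.choose_spec
  have hpuniq : ∀ v w, M.Adj v w → w = p v := by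
    intro v w hvw
    have hv : v ∈ M.verts := M.edge_vert hvw
    exact (hM hv).unique hvw (hpadj v hv)
  have hpp : ∀ v ∈ M.verts, p (p v) = v := fun v hv => (hpuniq _ _ (hpadj v hv).symm).symm
  have hpvert : ∀ v ∈ M.verts, p v ∈ M.verts := fun v hv => M.edge_vert (hpadj v hv).symm
  have hpG : ∀ v ∈ M.verts, G.Adj v (p v) := fun v hv => M.adj_sub (hpadj v hv)
  -- every neighbor of an unmatched vertex is matched
  have hunm : ∀ v, v ∉ M.verts → ∀ u, G.Adj v u → u ∈ M.verts := by
    intro v hv u hadj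
    by_contra hu
    have hd : Disjoint M.support (G.subgraphOfAdj hadj).support := by
      rw [hM.support_eq_verts, SimpleGraph.support_subgraphOfAdj]
      rw [Set.disjoint_right]
      rintro x (rfl | rfl) <;> assumption
    have hM' : (M ⊔ G.subgraphOfAdj hadj).IsMatching :=
      hM.sup (Subgraph.IsMatching.subgraphOfAdj hadj) hd
    have heq := hmax _ hM' (by rw [Subgraph.edgeSet_sup]; exact Set.subset_union_left)
    have : s(v, u) ∈ M.edgeSet := by
      rw [heq, Subgraph.edgeSet_sup, SimpleGraph.edgeSet_subgraphOfAdj]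
      exact Set.mem_union_right _ rfl
    exact hv (M.edge_vert (Subgraph.mem_edgeSet.mp this))
  -- counting: |V(M)| = 2 |E(M)|
  have hcount : M.verts.ncard = 2 * M.edgeSet.ncard := by
    rw [Set.ncard_eq_toFinset_card' M.verts, Set.ncard_eq_toFinset_card' M.edgeSet]
    have hmaps : ∀ x ∈ M.verts.toFinset, s(x, p x) ∈ M.edgeSet.toFinset := by
      intro x hx
      rw [Set.mem_toFinset] at hx ⊢
      exact Subgraph.mem_edgeSet.mpr (hpadj x hx)
    rw [Finset.card_eq_sum_card_fiberwise hmaps]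
    have hfib : ∀ e ∈ M.edgeSet.toFinset,
        (M.verts.toFinset.filter (fun x => s(x, p x) = e)).card = 2 := by
      intro e he
      induction e with
      | h u v =>
        rw [Set.mem_toFinset] at he
        have huv : M.Adj u v := Subgraph.mem_edgeSet.mp he
        have hu : u ∈ M.verts := M.edge_vert huv
        have hv : v ∈ M.verts := M.edge_vert huv.symm
        have hpu : p u = v := (hpuniq _ _ huv).symm
        have hpv : p v = u := (hpuniq _ _ huv.symm).symm
        have : M.verts.toFinset.filter (fun x => s(x, p x) = s(u, v)) = {u, v} := by
          ext x
          simp only [Finset.mem_filter, Set.mem_toFinset, Finset.mem_insert,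
            Finset.mem_singleton]
          constructor
          · rintro ⟨hx, hxe⟩
            rw [Sym2.eq_iff] at hxe
            rcases hxe with ⟨rfl, -⟩ | ⟨rfl, -⟩
            · exact Or.inl rfl
            · exact Or.inr rfl
          · rintro (rfl | rfl)
            · exact ⟨hu, by rw [hpu]⟩
            · exact ⟨hv, by rw [hpv, Sym2.eq_swap]⟩
        rw [this, Finset.card_pair (M.adj_sub huv).ne]
    rw [Finset.sum_congr rfl hfib, Finset.sum_const, smul_eq_mul, mul_comm]
  -- total domination bound helper
  have hγ : ∀ S : Set V, IsTotalDomSet G S → gammaT G ≤ S.ncard :=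
    fun S hS => Nat.sInf_le ⟨S, hS, rfl⟩
  have hδ3 : 3 ≤ δ := h3
  by_cases hU : ∀ v : V, v ∈ M.verts
  · -- perfect matching case
    have hVne : Nonempty V := by
      by_contra hV
      rw [not_nonempty_iff] at hV
      have : δ = 0 := by
        rw [hδdef]
        unfold minDeg
        convert Nat.sInf_empty
        rw [Set.eq_empty_iff_forall_notMem]
        rintro n ⟨v, -⟩
        exact hV.elim v
      omega
    obtain ⟨w⟩ := hVne
    set A := G.neighborSet w with hA
    have hAsub : A ⊆ M.verts := fun a _ => hU a
    have hAcard : δ ≤ A.ncard := hdeg w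
    have hwA : w ∉ A := fun hw => G.irrefl hw
    set pool := (p '' A) \ {w} with hpool
    have hpAcard : (p '' A).ncard = A.ncard := by
      apply Set.ncard_image_of_injOn
      intro a ha b hb hab
      have := congrArg p hab
      rwa [hpp a (hAsub ha), hpp b (hAsub hb)] at this
    have hpoolcard : δ - 2 ≤ pool.ncard := by
      have h1 : p '' A ⊆ insert w pool := by
        intro x hx
        by_cases hxw : x = w
        · exact Or.inl hxw
        · exact Or.inr ⟨hx, hxw⟩
      have h2 : (p '' A).ncard ≤ pool.ncard + 1 :=
        le_trans (Set.ncard_le_ncard h1 (Set.toFinite _)) (Set.ncard_insert_le _ _)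
      omega
    obtain ⟨B, hBpool, hBcard⟩ := Set.exists_subset_card_eq hpoolcard
    set S := M.verts \ B with hS
    have hTDS : IsTotalDomSet G S := by
      intro z
      by_cases hz : z ∈ A
      · refine ⟨w, ⟨hU w, fun hw => ?_⟩, G.adj_symm hz⟩
        obtain ⟨-, hww⟩ := hBpool hw
        exact hww rfl
      · refine ⟨p z, ⟨hpvert z (hU z), fun hpz => ?_⟩, hpG z (hU z)⟩
        obtain ⟨⟨a, ha, hpa⟩, -⟩ := hBpool hpz
        have : a = z := by
          have := congrArg p hpa
          rwa [hpp a (hAsub ha), hpp z (hU z)] at this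
        exact hz (this ▸ ha)
    have hBsub : B ⊆ M.verts := fun b hb => by
      obtain ⟨⟨a, ha, hpa⟩, -⟩ := hBpool hb
      exact hpa ▸ hpvert a (hAsub ha)
    have hScard : S.ncard = M.verts.ncard - B.ncard :=
      Set.ncard_diff hBsub (Set.toFinite _)
    have hBle : B.ncard ≤ M.verts.ncard := Set.ncard_le_ncard hBsub (Set.toFinite _)
    have hfin := hγ S hTDS
    rw [hScard] at hfin
    omega
  · -- there is an unmatched vertex
    push_neg at hU
    obtain ⟨w, hw⟩ := hU
    set A := G.neighborSet w with hA
    have hAsub : A ⊆ M.verts := fun a ha => hunm w hw a ha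
    have hAcard : δ ≤ A.ncard := hdeg w
    set pool := p '' A with hpool
    have hpoolcard : δ - 1 ≤ pool.ncard := by
      have : pool.ncard = A.ncard := by
        apply Set.ncard_image_of_injOn
        intro a ha b hb hab
        have := congrArg p hab
        rwa [hpp a (hAsub ha), hpp b (hAsub hb)] at this
      omega
    obtain ⟨B, hBpool, hBcard⟩ := Set.exists_subset_card_eq hpoolcard
    have hBsub : B ⊆ M.verts := fun b hb => by
      obtain ⟨a, ha, hpa⟩ := hBpool hb
      exact hpa ▸ hpvert a (hAsub ha)
    set S := insert w (M.verts \ B) with hS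
    have hTDS : IsTotalDomSet G S := by
      intro z
      by_cases hz : z ∈ A
      · exact ⟨w, Set.mem_insert _ _, G.adj_symm hz⟩
      by_cases hzM : z ∈ M.verts
      · refine ⟨p z, Set.mem_insert_of_mem _ ⟨hpvert z hzM, fun hpz => ?_⟩, hpG z hzM⟩
        obtain ⟨a, ha, hpa⟩ := hBpool hpz
        have : a = z := by
          have := congrArg p hpa
          rwa [hpp a (hAsub ha), hpp z hzM] at this
        exact hz (this ▸ ha)
      · -- z unmatched: all its ≥ δ neighbors are matched, |B| = δ - 1 < δ
        have hNsub : G.neighborSet z ⊆ M.verts := fun u hu => hunm z hzM u hu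
        have hnotsub : ¬ G.neighborSet z ⊆ B := by
          intro hsub
          have := Set.ncard_le_ncard hsub (Set.toFinite _)
          have hdz := hdeg z
          omega
        rw [Set.not_subset] at hnotsub
        obtain ⟨u, hu, huB⟩ := hnotsub
        exact ⟨u, Set.mem_insert_of_mem _ ⟨hNsub hu, huB⟩, hu⟩
    have hwS : w ∉ M.verts \ B := fun hws => hw hws.1
    have hScard : S.ncard = (M.verts.ncard - B.ncard) + 1 := by
      rw [hS, Set.ncard_insert_of_notMem hwS (Set.toFinite _),
        Set.ncard_diff hBsub (Set.toFinite _)]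
    have hBle : B.ncard ≤ M.verts.ncard := Set.ncard_le_ncard hBsub (Set.toFinite _)
    have hfin := hγ S hTDS
    rw [hScard] at hfin
    omega

end TotalDomMM
end

section
/- For every integer δ ≥ 3 and every integer N, there exists a finite simple graph G on more than N vertices with minimum degree δ(G) = δ and γ_t(G) = 2μ*(G) − δ + 2. (In particular, for every fixed δ ≥ 3 there exist infinitely many graphs attaining the bound γ_t(G) = 2μ*(G) − δ(G) + 2.) -/
open SimpleGraph

namespace TotalDomMM

variable {V : Type*}

namespace S4


/-- oriented half of the label adjacency rule; labels: 0 = hub, 1 = a, 2 = b, 3 = W1, 4 = W2 -/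
def fb (e : Bool) (x y : ℕ) : Bool :=
  (x == 0 && y == 0) || (x == 0 && y == 3) || (x == 0 && y == 4) ||
  (x == 1 && y == 2) || (x == 1 && y == 3) || (x == 2 && y == 4) ||
  (e && x == 2 && y == 3)

def Rb (e : Bool) (x y : ℕ) : Bool := fb e x y || fb e y x

lemma Rb_symm (e : Bool) (x y : ℕ) : Rb e x y = Rb e y x := Bool.or_comm _ _

lemma fb_left_le (e : Bool) {x y : ℕ} (h : fb e x y = true) : x ≤ 2 := by
  simp only [fb, Bool.or_eq_true, Bool.and_eq_true, beq_iff_eq] at h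
  rcases h with ((((((⟨h,_⟩|⟨h,_⟩)|⟨h,_⟩)|⟨h,_⟩)|⟨h,_⟩)|⟨h,_⟩)|⟨⟨_,h⟩,_⟩) <;> omega

lemma Rb_le (e : Bool) {x y : ℕ} (h : Rb e x y = true) : x ≤ 2 ∨ y ≤ 2 := by
  rcases Bool.or_eq_true_iff.mp h with h | h
  · exact Or.inl (fb_left_le e h)
  · exact Or.inr (fb_left_le e h)

section RbEval
variable (e : Bool) (c : ℕ)
lemma Rb0 : Rb e 0 c = true ↔ c = 0 ∨ c = 3 ∨ c = 4 := by
  cases e <;> simp [Rb, fb] <;> omega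
lemma Rb1 : Rb e 1 c = true ↔ c = 2 ∨ c = 3 := by
  cases e <;> simp [Rb, fb] <;> omega
lemma Rb2 : Rb e 2 c = true ↔ c = 1 ∨ c = 4 ∨ (e = true ∧ c = 3) := by
  cases e <;> simp [Rb, fb] <;> omega
lemma Rb3 : Rb e 3 c = true ↔ c = 0 ∨ c = 1 ∨ (e = true ∧ c = 2) := by
  cases e <;> simp [Rb, fb] <;> omega
lemma Rb4 : Rb e 4 c = true ↔ c = 0 ∨ c = 2 := by
  cases e <;> simp [Rb, fb] <;> omega
end RbEval

/-- toolkit: sets of `Fin m` described by a finset of values -/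
lemma ncard_val_mem {m : ℕ} (T : Finset ℕ) (hT : ∀ x ∈ T, x < m) :
    {j : Fin m | (j : ℕ) ∈ T}.ncard = T.card := by
  have himg : Fin.val '' {j : Fin m | (j : ℕ) ∈ T} = (T : Set ℕ) := by
    ext x
    simp only [Set.mem_image, Set.mem_setOf_eq, Finset.mem_coe]
    constructor
    · rintro ⟨j, hj, rfl⟩; exact hj
    · intro hx; exact ⟨⟨x, hT x hx⟩, hx, rfl⟩
  have h2 := Set.ncard_image_of_injective {j : Fin m | (j : ℕ) ∈ T} (Fin.val_injective)
  rw [himg] at h2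
  rw [← h2, Set.ncard_coe_finset]

section
variable (δ N : ℕ)

def sz : ℕ := δ - 2 + δ % 2
def kk : ℕ := N + 2 * δ
def k1 : ℕ := if δ % 2 = 1 then kk δ N else 2 * kk δ N
def k2 : ℕ := if δ % 2 = 1 then kk δ N else 0
def nn : ℕ := sz δ + 2 + k1 δ N + k2 δ N
def ev : Bool := decide (δ % 2 = 0)
def cls (i : ℕ) : ℕ :=
  if i < sz δ then 0 else if i = sz δ then 1 else if i = sz δ + 1 then 2
  else if i < sz δ + 2 + k1 δ N then 3 else 4

lemma ev_iff : ev δ = true ↔ δ % 2 = 0 := by simp [ev]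
lemma ev_false_iff : ev δ = false ↔ δ % 2 = 1 := by simp [ev]

lemma k1_ge (hδ : 3 ≤ δ) : δ + sz δ + 1 ≤ k1 δ N := by
  unfold k1 kk sz; split_ifs <;> omega
lemma k2_odd (h : δ % 2 = 1) : k2 δ N = kk δ N := by simp [k2, h]
lemma k2_even (h : δ % 2 = 0) : k2 δ N = 0 := by simp [k2]; omega
lemma kk_ge (hδ : 3 ≤ δ) : δ ≤ kk δ N ∧ N < kk δ N := by unfold kk; omega
lemma nn_pos : 0 < nn δ N := by unfold nn; omega
lemma sz_even (hδ : 3 ≤ δ) : sz δ % 2 = 0 := by unfold sz; omega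
lemma sz_ge (hδ : 3 ≤ δ) : 2 ≤ sz δ ∧ sz δ ≤ δ - 1 ∧ δ ≤ sz δ + 2 := by unfold sz; omega

lemma cls_eq0 {i : ℕ} : cls δ N i = 0 ↔ i < sz δ := by
  unfold cls; split_ifs <;> simp_all <;> omega
lemma cls_eq1 {i : ℕ} : cls δ N i = 1 ↔ i = sz δ := by
  unfold cls; split_ifs <;> simp_all <;> omega
lemma cls_eq2 {i : ℕ} : cls δ N i = 2 ↔ i = sz δ + 1 := by
  unfold cls; split_ifs <;> simp_all <;> omega
lemma cls_eq3 {i : ℕ} : cls δ N i = 3 ↔ sz δ + 2 ≤ i ∧ i < sz δ + 2 + k1 δ N := by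
  unfold cls; split_ifs <;> simp_all <;> omega
lemma cls_eq4 {i : ℕ} : cls δ N i = 4 ↔ sz δ + 2 + k1 δ N ≤ i := by
  unfold cls; split_ifs <;> simp_all <;> omega
lemma cls_le2 {i : ℕ} : cls δ N i ≤ 2 ↔ i < sz δ + 2 := by
  unfold cls; split_ifs <;> simp_all <;> omega
lemma cls_cases (i : ℕ) : cls δ N i = 0 ∨ cls δ N i = 1 ∨ cls δ N i = 2 ∨
    cls δ N i = 3 ∨ cls δ N i = 4 := by unfold cls; split_ifs <;> simp

def fi (x : ℕ) : Fin (nn δ N) := ⟨x % nn δ N, Nat.mod_lt _ (nn_pos δ N)⟩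
lemma val_fi {x : ℕ} (h : x < nn δ N) : ((fi δ N x : Fin (nn δ N)) : ℕ) = x := Nat.mod_eq_of_lt h

def G : SimpleGraph (Fin (nn δ N)) where
  Adj i j := i ≠ j ∧ Rb (ev δ) (cls δ N (i : ℕ)) (cls δ N (j : ℕ)) = true
  symm := by
    constructor
    intro i j ⟨h1, h2⟩
    exact ⟨h1.symm, (Rb_symm _ _ _).trans h2⟩
  loopless := ⟨fun i h => h.1 rfl⟩

lemma adj_iff (i j : Fin (nn δ N)) :
    (G δ N).Adj i j ↔ i ≠ j ∧ Rb (ev δ) (cls δ N (i : ℕ)) (cls δ N (j : ℕ)) = true := Iff.rfl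

lemma adj_of_val {i j : Fin (nn δ N)} (hne : (i : ℕ) ≠ (j : ℕ))
    (hR : Rb (ev δ) (cls δ N (i : ℕ)) (cls δ N (j : ℕ)) = true) : (G δ N).Adj i j :=
  ⟨fun h => hne (congrArg Fin.val h), hR⟩

end

section
variable (δ N : ℕ)

def W1 : Set (Fin (nn δ N)) := {j | (j : ℕ) ∈ Finset.Ico (sz δ + 2) (sz δ + 2 + k1 δ N)}
def W2 : Set (Fin (nn δ N)) :=
  {j | (j : ℕ) ∈ Finset.Ico (sz δ + 2 + k1 δ N) (sz δ + 2 + k1 δ N + k2 δ N)}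

lemma W1_ncard : (W1 δ N).ncard = k1 δ N := by
  unfold W1; rw [ncard_val_mem]
  · simp
  · intro x hx; simp only [Finset.mem_Ico] at hx; unfold nn; omega

lemma W2_ncard : (W2 δ N).ncard = k2 δ N := by
  unfold W2; rw [ncard_val_mem]
  · simp
  · intro x hx; simp only [Finset.mem_Ico] at hx; unfold nn; omega

lemma W1_cls {j : Fin (nn δ N)} (hj : j ∈ W1 δ N) : cls δ N (j : ℕ) = 3 := by
  simp only [W1, Set.mem_setOf_eq, Finset.mem_Ico] at hj
  exact (cls_eq3 δ N).mpr hj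

lemma W2_cls {j : Fin (nn δ N)} (hj : j ∈ W2 δ N) : cls δ N (j : ℕ) = 4 := by
  simp only [W2, Set.mem_setOf_eq, Finset.mem_Ico] at hj
  exact (cls_eq4 δ N).mpr hj.1

lemma W1_sub_nbr {v : Fin (nn δ N)}
    (hv : cls δ N (v : ℕ) = 0 ∨ cls δ N (v : ℕ) = 1 ∨ (ev δ = true ∧ cls δ N (v : ℕ) = 2)) :
    W1 δ N ⊆ (G δ N).neighborSet v := by
  intro j hj
  have hj3 := W1_cls δ N hj
  have hvval : (v : ℕ) < sz δ + 2 := by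
    rcases hv with h | h | ⟨_, h⟩
    · exact (cls_le2 δ N).mp (by omega)
    · exact (cls_le2 δ N).mp (by omega)
    · exact (cls_le2 δ N).mp (by omega)
  have hjval := (cls_eq3 δ N).mp hj3
  apply adj_of_val δ N (by omega)
  rw [hj3]
  rcases hv with h | h | ⟨he, h⟩ <;> rw [h]
  · exact (Rb0 _ _).mpr (by omega)
  · exact (Rb1 _ _).mpr (by omega)
  · exact (Rb2 _ _).mpr (Or.inr (Or.inr ⟨he, rfl⟩))

lemma W2_sub_nbr {v : Fin (nn δ N)}
    (hv : cls δ N (v : ℕ) = 0 ∨ cls δ N (v : ℕ) = 2) :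
    W2 δ N ⊆ (G δ N).neighborSet v := by
  intro j hj
  have hj4 := W2_cls δ N hj
  have hvval : (v : ℕ) < sz δ + 2 := by
    rcases hv with h | h
    · exact (cls_le2 δ N).mp (by omega)
    · exact (cls_le2 δ N).mp (by omega)
  have hjval := (cls_eq4 δ N).mp hj4
  apply adj_of_val δ N (by omega)
  rw [hj4]
  rcases hv with h | h <;> rw [h]
  · exact (Rb0 _ _).mpr (by omega)
  · exact (Rb2 _ _).mpr (by omega)

lemma nbr_cls3 (hδ : 3 ≤ δ) {v : Fin (nn δ N)} (hv : cls δ N (v : ℕ) = 3) :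
    (G δ N).neighborSet v = {j : Fin (nn δ N) | (j : ℕ) ∈ Finset.Iio δ} := by
  have hs := sz_ge δ hδ
  have hvval := (cls_eq3 δ N).mp hv
  ext j
  simp only [mem_neighborSet, adj_iff, Set.mem_setOf_eq, Finset.mem_Iio, hv]
  constructor
  · rintro ⟨hne, hR⟩
    rcases (Rb3 _ _).mp hR with h | h | ⟨he, h⟩
    · have := (cls_eq0 δ N).mp h; omega
    · have := (cls_eq1 δ N).mp h; omega
    · have := (cls_eq2 δ N).mp h
      have := (ev_iff δ).mp he
      unfold sz at *; omega
  · intro hj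
    have hcase : (j : ℕ) < sz δ ∨ (j : ℕ) = sz δ ∨ (δ % 2 = 0 ∧ (j : ℕ) = sz δ + 1) := by
      unfold sz at *; omega
    refine ⟨fun h => by rw [h] at hvval; omega, (Rb3 _ _).mpr ?_⟩
    rcases hcase with h | h | ⟨hp, h⟩
    · exact Or.inl ((cls_eq0 δ N).mpr h)
    · exact Or.inr (Or.inl ((cls_eq1 δ N).mpr h))
    · exact Or.inr (Or.inr ⟨(ev_iff δ).mpr hp, (cls_eq2 δ N).mpr h⟩)

lemma nbr_cls4 (hδ : 3 ≤ δ) (hp : δ % 2 = 1) {v : Fin (nn δ N)} (hv : cls δ N (v : ℕ) = 4) :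
    (G δ N).neighborSet v
      = {j : Fin (nn δ N) | (j : ℕ) ∈ Finset.Iio (sz δ) ∪ {sz δ + 1}} := by
  have hs := sz_ge δ hδ
  have hvval := (cls_eq4 δ N).mp hv
  ext j
  simp only [mem_neighborSet, adj_iff, Set.mem_setOf_eq, Finset.mem_union, Finset.mem_Iio,
    Finset.mem_singleton, hv]
  constructor
  · rintro ⟨hne, hR⟩
    rcases (Rb4 _ _).mp hR with h | h
    · exact Or.inl ((cls_eq0 δ N).mp h)
    · exact Or.inr ((cls_eq2 δ N).mp h)
  · intro hj
    have hk := k1_ge δ N hδ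
    refine ⟨fun h => by rw [h] at hvval; omega, (Rb4 _ _).mpr ?_⟩
    rcases hj with h | h
    · exact Or.inl ((cls_eq0 δ N).mpr h)
    · exact Or.inr ((cls_eq2 δ N).mpr h)

lemma w0_mem (hδ : 3 ≤ δ) : cls δ N ((fi δ N (sz δ + 2) : Fin (nn δ N)) : ℕ) = 3 := by
  have hk := k1_ge δ N hδ
  rw [val_fi δ N (by unfold nn; omega)]
  exact (cls_eq3 δ N).mpr (by omega)

theorem minDeg_eq (hδ : 3 ≤ δ) : minDeg (G δ N) = δ := by
  have hk := k1_ge δ N hδ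
  have hs := sz_ge δ hδ
  have hkk := kk_ge δ N hδ
  have hdeg3 : ∀ v : Fin (nn δ N), cls δ N (v : ℕ) = 3 →
      ((G δ N).neighborSet v).ncard = δ := by
    intro v hv
    rw [nbr_cls3 δ N hδ hv, ncard_val_mem _ (fun x hx => by
      simp only [Finset.mem_Iio] at hx; unfold nn; omega)]
    simp
  have hmem : δ ∈ {k | ∃ v : Fin (nn δ N), ((G δ N).neighborSet v).ncard = k} :=
    ⟨fi δ N (sz δ + 2), hdeg3 _ (w0_mem δ N hδ)⟩
  unfold minDeg
  apply le_antisymm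
  · exact Nat.sInf_le hmem
  · apply le_csInf ⟨δ, hmem⟩
    rintro d ⟨v, rfl⟩
    rcases cls_cases δ N (v : ℕ) with h | h | h | h | h
    · calc δ ≤ k1 δ N := by omega
        _ = (W1 δ N).ncard := (W1_ncard δ N).symm
        _ ≤ _ := Set.ncard_le_ncard (W1_sub_nbr δ N (Or.inl h)) (Set.toFinite _)
    · calc δ ≤ k1 δ N := by omega
        _ = (W1 δ N).ncard := (W1_ncard δ N).symm
        _ ≤ _ := Set.ncard_le_ncard (W1_sub_nbr δ N (Or.inr (Or.inl h))) (Set.toFinite _)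
    · rcases Nat.even_or_odd δ with hp | hp
      · have hp' : δ % 2 = 0 := Nat.even_iff.mp hp
        calc δ ≤ k1 δ N := by omega
          _ = (W1 δ N).ncard := (W1_ncard δ N).symm
          _ ≤ _ := Set.ncard_le_ncard
              (W1_sub_nbr δ N (Or.inr (Or.inr ⟨(ev_iff δ).mpr hp', h⟩))) (Set.toFinite _)
      · have hp' : δ % 2 = 1 := Nat.odd_iff.mp hp
        calc δ ≤ k2 δ N := by rw [k2_odd δ N hp']; omega
          _ = (W2 δ N).ncard := (W2_ncard δ N).symm
          _ ≤ _ := Set.ncard_le_ncard (W2_sub_nbr δ N (Or.inr h)) (Set.toFinite _)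
    · exact le_of_eq (hdeg3 v h).symm
    · rcases Nat.even_or_odd δ with hp | hp
      · exfalso
        have hp' : δ % 2 = 0 := Nat.even_iff.mp hp
        have h4 := (cls_eq4 δ N).mp h
        have hv := v.isLt
        have := k2_even δ N hp'
        unfold nn at hv; omega
      · have hp' : δ % 2 = 1 := Nat.odd_iff.mp hp
        rw [nbr_cls4 δ N hδ hp' h, ncard_val_mem _ (fun x hx => by
          simp only [Finset.mem_union, Finset.mem_Iio, Finset.mem_singleton] at hx
          unfold nn; omega)]
        rw [Finset.card_union_of_disjoint (by simp)]
        simp only [Nat.card_Iio, Finset.card_singleton]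
        unfold sz at *; omega

end


section
variable (δ N : ℕ)

lemma cls_w0 (hδ : 3 ≤ δ) : cls δ N ((fi δ N (sz δ + 2) : Fin (nn δ N)) : ℕ) = 3 :=
  w0_mem δ N hδ

lemma cls_a (hδ : 3 ≤ δ) : cls δ N ((fi δ N (sz δ) : Fin (nn δ N)) : ℕ) = 1 := by
  rw [val_fi δ N (by unfold nn; omega)]; exact (cls_eq1 δ N).mpr rfl

lemma cls_b (hδ : 3 ≤ δ) : cls δ N ((fi δ N (sz δ + 1) : Fin (nn δ N)) : ℕ) = 2 := by
  rw [val_fi δ N (by unfold nn; omega)]; exact (cls_eq2 δ N).mpr rfl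

lemma cls_h0 (hδ : 3 ≤ δ) : cls δ N ((fi δ N 0 : Fin (nn δ N)) : ℕ) = 0 := by
  have hs := sz_ge δ hδ
  rw [val_fi δ N (by unfold nn; omega)]; exact (cls_eq0 δ N).mpr (by omega)

lemma cls_w2 (hδ : 3 ≤ δ) (hp : δ % 2 = 1) :
    cls δ N ((fi δ N (sz δ + 2 + k1 δ N) : Fin (nn δ N)) : ℕ) = 4 := by
  have hkk := kk_ge δ N hδ
  have h2 := k2_odd δ N hp
  rw [val_fi δ N (by unfold nn; omega)]; exact (cls_eq4 δ N).mpr (by omega)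

lemma val_a (hδ : 3 ≤ δ) : ((fi δ N (sz δ) : Fin (nn δ N)) : ℕ) = sz δ :=
  val_fi δ N (by unfold nn; omega)
lemma val_b (hδ : 3 ≤ δ) : ((fi δ N (sz δ + 1) : Fin (nn δ N)) : ℕ) = sz δ + 1 :=
  val_fi δ N (by unfold nn; omega)
lemma val_w0 (hδ : 3 ≤ δ) : ((fi δ N (sz δ + 2) : Fin (nn δ N)) : ℕ) = sz δ + 2 := by
  have hk := k1_ge δ N hδ
  exact val_fi δ N (by unfold nn; omega)

lemma not_dom {x y v : Fin (nn δ N)} (hdom : IsTotalDomSet (G δ N) {x, y})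
    (h1 : ¬ (G δ N).Adj v x) (h2 : ¬ (G δ N).Adj v y) : False := by
  obtain ⟨u, hu, hadj⟩ := hdom v
  simp only [Set.mem_insert_iff, Set.mem_singleton_iff] at hu
  rcases hu with rfl | rfl
  · exact h1 hadj
  · exact h2 hadj

lemma not_adj_cc (hp : δ % 2 = 1) {v x : Fin (nn δ N)} {cv cx : ℕ}
    (h1 : cls δ N (v : ℕ) = cv) (h2 : cls δ N (x : ℕ) = cx)
    (h3 : Rb false cv cx = false) : ¬ (G δ N).Adj v x := by
  intro h
  have hR := h.2
  rw [(ev_false_iff δ).mpr hp, h1, h2, h3] at hR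
  exact Bool.false_ne_true hR

lemma RbF_cases {x y : ℕ} (h : Rb false x y = true) :
    (x=0∧y=0)∨(x=0∧y=3)∨(x=3∧y=0)∨(x=0∧y=4)∨(x=4∧y=0)∨(x=1∧y=2)∨(x=2∧y=1)∨
    (x=1∧y=3)∨(x=3∧y=1)∨(x=2∧y=4)∨(x=4∧y=2) := by
  have h2 : fb false x y = true ∨ fb false y x = true := by
    have h' := h
    unfold Rb at h'
    exact Bool.or_eq_true_iff.mp h'
  have key : ∀ a b : ℕ, fb false a b = true →
      (a=0∧b=0)∨(a=0∧b=3)∨(a=0∧b=4)∨(a=1∧b=2)∨(a=1∧b=3)∨(a=2∧b=4) := by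
    intro a b hab
    simp only [fb, Bool.or_eq_true, Bool.and_eq_true, beq_iff_eq, Bool.false_eq_true,
      false_and, and_false, or_false, false_or] at hab
    omega
  rcases h2 with h2 | h2 <;> rcases key _ _ h2 with h3|h3|h3|h3|h3|h3 <;> omega

lemma gammaT_ge2 (c : ℕ)
    (hc : c ∈ {n | ∃ S : Set (Fin (nn δ N)), IsTotalDomSet (G δ N) S ∧ S.ncard = n}) :
    2 ≤ c := by
  obtain ⟨S, hdom, hcard⟩ := hc
  by_contra hlt
  push_neg at hlt
  interval_cases c
  · rw [Set.ncard_eq_zero (Set.toFinite S)] at hcard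
    obtain ⟨u, hu, _⟩ := hdom (fi δ N 0)
    rw [hcard] at hu
    exact hu
  · rw [Set.ncard_eq_one] at hcard
    obtain ⟨x, rfl⟩ := hcard
    obtain ⟨u, hu, hadj⟩ := hdom x
    rw [Set.mem_singleton_iff] at hu
    subst hu
    exact (G δ N).irrefl hadj

theorem gammaT_even (hδ : 3 ≤ δ) (hp : δ % 2 = 0) : gammaT (G δ N) = 2 := by
  have hk := k1_ge δ N hδ
  have hs := sz_ge δ hδ
  have he : ev δ = true := (ev_iff δ).mpr hp
  have hmem : 2 ∈ {n | ∃ S : Set (Fin (nn δ N)), IsTotalDomSet (G δ N) S ∧ S.ncard = n} := by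
    refine ⟨{fi δ N (sz δ), fi δ N (sz δ + 2)}, ?_, ?_⟩
    · intro v
      rcases cls_cases δ N (v : ℕ) with h | h | h | h | h
      · have hv := (cls_eq0 δ N).mp h
        refine ⟨fi δ N (sz δ + 2), by simp, adj_of_val δ N ?_ ?_⟩
        · rw [val_w0 δ N hδ]; omega
        · rw [h, cls_w0 δ N hδ]; exact (Rb0 _ _).mpr (by omega)
      · have hv := (cls_eq1 δ N).mp h
        refine ⟨fi δ N (sz δ + 2), by simp, adj_of_val δ N ?_ ?_⟩
        · rw [val_w0 δ N hδ]; omega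
        · rw [h, cls_w0 δ N hδ]; exact (Rb1 _ _).mpr (by omega)
      · have hv := (cls_eq2 δ N).mp h
        refine ⟨fi δ N (sz δ + 2), by simp, adj_of_val δ N ?_ ?_⟩
        · rw [val_w0 δ N hδ]; omega
        · rw [h, cls_w0 δ N hδ, he]; decide
      · have hv := (cls_eq3 δ N).mp h
        refine ⟨fi δ N (sz δ), by simp, adj_of_val δ N ?_ ?_⟩
        · rw [val_a δ N hδ]; omega
        · rw [h, cls_a δ N hδ]; exact (Rb3 _ _).mpr (by omega)
      · exfalso
        have hv := (cls_eq4 δ N).mp h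
        have hlt := v.isLt
        have h0 := k2_even δ N hp
        unfold nn at hlt; omega
    · refine Set.ncard_pair (fun hcon => ?_)
      have := congrArg Fin.val hcon
      rw [val_a δ N hδ, val_w0 δ N hδ] at this
      omega
  apply le_antisymm
  · exact Nat.sInf_le hmem
  · exact le_csInf ⟨2, hmem⟩ (gammaT_ge2 δ N)

theorem gammaT_odd (hδ : 3 ≤ δ) (hp : δ % 2 = 1) : gammaT (G δ N) = 3 := by
  have hk := k1_ge δ N hδ
  have hs := sz_ge δ hδ
  have he : ev δ = false := (ev_false_iff δ).mpr hp
  have hmem : 3 ∈ {n | ∃ S : Set (Fin (nn δ N)), IsTotalDomSet (G δ N) S ∧ S.ncard = n} := by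
    refine ⟨{fi δ N (sz δ + 2), fi δ N (sz δ), fi δ N (sz δ + 1)}, ?_, ?_⟩
    · intro v
      rcases cls_cases δ N (v : ℕ) with h | h | h | h | h
      · have hv := (cls_eq0 δ N).mp h
        refine ⟨fi δ N (sz δ + 2), by simp, adj_of_val δ N ?_ ?_⟩
        · rw [val_w0 δ N hδ]; omega
        · rw [h, cls_w0 δ N hδ]; exact (Rb0 _ _).mpr (by omega)
      · have hv := (cls_eq1 δ N).mp h
        refine ⟨fi δ N (sz δ + 1), by simp, adj_of_val δ N ?_ ?_⟩
        · rw [val_b δ N hδ]; omega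
        · rw [h, cls_b δ N hδ]; exact (Rb1 _ _).mpr (by omega)
      · have hv := (cls_eq2 δ N).mp h
        refine ⟨fi δ N (sz δ), by simp, adj_of_val δ N ?_ ?_⟩
        · rw [val_a δ N hδ]; omega
        · rw [h, cls_a δ N hδ]; exact (Rb2 _ _).mpr (by omega)
      · have hv := (cls_eq3 δ N).mp h
        refine ⟨fi δ N (sz δ), by simp, adj_of_val δ N ?_ ?_⟩
        · rw [val_a δ N hδ]; omega
        · rw [h, cls_a δ N hδ]; exact (Rb3 _ _).mpr (by omega)
      · have hv := (cls_eq4 δ N).mp h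
        refine ⟨fi δ N (sz δ + 1), by simp, adj_of_val δ N ?_ ?_⟩
        · rw [val_b δ N hδ]; omega
        · rw [h, cls_b δ N hδ]; exact (Rb4 _ _).mpr (by omega)
    · rw [Set.ncard_insert_of_notMem ?_ (Set.toFinite _)]
      · rw [Set.ncard_pair (fun hcon => ?_)]
        have := congrArg Fin.val hcon
        rw [val_a δ N hδ, val_b δ N hδ] at this
        omega
      · intro hcon
        simp only [Set.mem_insert_iff, Set.mem_singleton_iff] at hcon
        rcases hcon with hcon | hcon <;> (
          have := congrArg Fin.val hcon
          first
            | rw [val_w0 δ N hδ, val_a δ N hδ] at this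
            | rw [val_w0 δ N hδ, val_b δ N hδ] at this
          omega)
  apply le_antisymm
  · exact Nat.sInf_le hmem
  · refine le_csInf ⟨3, hmem⟩ ?_
    rintro c ⟨S, hdom, hcard⟩
    by_contra hlt
    push_neg at hlt
    have h2 : c = 2 := by
      have := gammaT_ge2 δ N c ⟨S, hdom, hcard⟩
      omega
    subst h2
    rw [Set.ncard_eq_two] at hcard
    obtain ⟨x, y, hxy, rfl⟩ := hcard
    have hadjxy : (G δ N).Adj x y := by
      obtain ⟨u, hu, hadj⟩ := hdom x
      simp only [Set.mem_insert_iff, Set.mem_singleton_iff] at hu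
      rcases hu with rfl | rfl
      · exact absurd hadj ((G δ N).irrefl)
      · exact hadj
    have hR : Rb false (cls δ N (x : ℕ)) (cls δ N (y : ℕ)) = true := by
      have := hadjxy.2; rwa [he] at this
    rcases RbF_cases hR with ⟨hx,hy⟩|⟨hx,hy⟩|⟨hx,hy⟩|⟨hx,hy⟩|⟨hx,hy⟩|⟨hx,hy⟩|⟨hx,hy⟩|⟨hx,hy⟩|⟨hx,hy⟩|⟨hx,hy⟩|⟨hx,hy⟩
    · exact not_dom δ N hdom (not_adj_cc δ N hp (cls_a δ N hδ) hx (by decide))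
        (not_adj_cc δ N hp (cls_a δ N hδ) hy (by decide))
    · exact not_dom δ N hdom (not_adj_cc δ N hp (cls_b δ N hδ) hx (by decide))
        (not_adj_cc δ N hp (cls_b δ N hδ) hy (by decide))
    · exact not_dom δ N hdom (not_adj_cc δ N hp (cls_b δ N hδ) hx (by decide))
        (not_adj_cc δ N hp (cls_b δ N hδ) hy (by decide))
    · exact not_dom δ N hdom (not_adj_cc δ N hp (cls_a δ N hδ) hx (by decide))
        (not_adj_cc δ N hp (cls_a δ N hδ) hy (by decide))
    · exact not_dom δ N hdom (not_adj_cc δ N hp (cls_a δ N hδ) hx (by decide))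
        (not_adj_cc δ N hp (cls_a δ N hδ) hy (by decide))
    · exact not_dom δ N hdom (not_adj_cc δ N hp (cls_h0 δ N hδ) hx (by decide))
        (not_adj_cc δ N hp (cls_h0 δ N hδ) hy (by decide))
    · exact not_dom δ N hdom (not_adj_cc δ N hp (cls_h0 δ N hδ) hx (by decide))
        (not_adj_cc δ N hp (cls_h0 δ N hδ) hy (by decide))
    · exact not_dom δ N hdom (not_adj_cc δ N hp (cls_w2 δ N hδ hp) hx (by decide))
        (not_adj_cc δ N hp (cls_w2 δ N hδ hp) hy (by decide))
    · exact not_dom δ N hdom (not_adj_cc δ N hp (cls_w2 δ N hδ hp) hx (by decide))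
        (not_adj_cc δ N hp (cls_w2 δ N hδ hp) hy (by decide))
    · exact not_dom δ N hdom (not_adj_cc δ N hp (cls_w0 δ N hδ) hx (by decide))
        (not_adj_cc δ N hp (cls_w0 δ N hδ) hy (by decide))
    · exact not_dom δ N hdom (not_adj_cc δ N hp (cls_w0 δ N hδ) hx (by decide))
        (not_adj_cc δ N hp (cls_w0 δ N hδ) hy (by decide))

end


section MatchingGeneral
open SimpleGraph.Subgraph

lemma verts_ncard_le {V : Type*} [Fintype V] [LinearOrder V] {G : SimpleGraph V}
    {M : G.Subgraph} (hM : M.IsMatching) : M.verts.ncard ≤ 2 * M.edgeSet.ncard := by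
  classical
  have hg : ∀ v : M.verts, ∃ w, M.Adj ↑v w := fun v => (hM v.2).exists
  choose p hp using hg
  let g : M.verts → M.edgeSet × Bool := fun v =>
    (⟨s((v : V), p v), Subgraph.mem_edgeSet.mpr (hp v)⟩, decide ((v : V) ≤ p v))
  have hginj : Function.Injective g := by
    intro v w hvw
    have h1 : s((v : V), p v) = s((w : V), p w) :=
      congrArg (fun z : M.edgeSet × Bool => (z.1 : Sym2 V)) hvw
    have h2 : decide ((v : V) ≤ p v) = decide ((w : V) ≤ p w) :=
      congrArg Prod.snd hvw
    have h3 : ((v : V) ≤ p v ↔ (w : V) ≤ p w) := decide_eq_decide.mp h2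
    rcases Sym2.eq_iff.mp h1 with ⟨ha, hb⟩ | ⟨ha, hb⟩
    · exact Subtype.ext ha
    · apply Subtype.ext
      by_cases hle : (v : V) ≤ p v
      · have h4 : (w : V) ≤ p w := h3.mp hle
        exact le_antisymm (hb ▸ hle) (ha ▸ h4)
      · have h4 : ¬ (w : V) ≤ p w := fun hh => hle (h3.mpr hh)
        have l1 : p v < (v : V) := not_le.mp hle
        have l2 : p w < (w : V) := not_le.mp h4
        rw [hb] at l1
        rw [← ha] at l2
        exact absurd (l1.trans l2) (lt_irrefl _)
  have hcard := Nat.card_le_card_of_injective g hginj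
  rw [Nat.card_prod, Nat.card_eq_fintype_card (α := Bool)] at hcard
  rw [Nat.card_coe_set_eq, Nat.card_coe_set_eq] at hcard
  simpa [Fintype.card_bool, Nat.mul_comm] using hcard

lemma maximal_no_free_edge {V : Type*} {G : SimpleGraph V} {M : G.Subgraph}
    (hM : IsMaximalMatching G M) {x y : V} (hxy : G.Adj x y) :
    x ∈ M.verts ∨ y ∈ M.verts := by
  by_contra hcon
  push_neg at hcon
  obtain ⟨hx, hy⟩ := hcon
  have hdisj : Disjoint M.support (G.subgraphOfAdj hxy).support := by
    rw [hM.1.support_eq_verts, (Subgraph.IsMatching.subgraphOfAdj hxy).support_eq_verts]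
    rw [Set.disjoint_right]
    intro a ha
    simp only [subgraphOfAdj_verts, Set.mem_insert_iff, Set.mem_singleton_iff] at ha
    rcases ha with rfl | rfl
    · exact hx
    · exact hy
  have hmat' : (M ⊔ G.subgraphOfAdj hxy).IsMatching :=
    hM.1.sup (Subgraph.IsMatching.subgraphOfAdj hxy) hdisj
  have heq := hM.2 _ hmat' (Subgraph.edgeSet_mono le_sup_left)
  have hmem : s(x, y) ∈ (M ⊔ G.subgraphOfAdj hxy).edgeSet := by
    rw [Subgraph.edgeSet_sup]
    exact Or.inr (by simp)
  rw [← heq] at hmem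
  exact hx (Subgraph.mem_edgeSet.mp hmem).fst_mem

end MatchingGeneral

section
variable (δ N : ℕ)

def M0 (hδ : 3 ≤ δ) : (G δ N).Subgraph where
  verts := {j | (j : ℕ) < sz δ + 2}
  Adj i j := (i : ℕ) < sz δ + 2 ∧ (j : ℕ) < sz δ + 2 ∧
    (((j : ℕ) = (i : ℕ) + 1 ∧ (i : ℕ) % 2 = 0) ∨ ((i : ℕ) = (j : ℕ) + 1 ∧ (j : ℕ) % 2 = 0))
  adj_sub := by
    rintro i j ⟨hi, hj, hp⟩
    have hse := sz_even δ hδ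
    apply adj_of_val δ N (by omega)
    rcases hp with ⟨h1, h2⟩ | ⟨h1, h2⟩
    · rcases Nat.lt_or_ge (j : ℕ) (sz δ) with hc | hc
      · rw [(cls_eq0 δ N).mpr (by omega), (cls_eq0 δ N).mpr (by omega)]
        exact (Rb0 _ _).mpr (by omega)
      · have hi1 : (i : ℕ) = sz δ := by omega
        have hj1 : (j : ℕ) = sz δ + 1 := by omega
        rw [(cls_eq1 δ N).mpr hi1, (cls_eq2 δ N).mpr hj1]
        exact (Rb1 _ _).mpr (by omega)
    · rcases Nat.lt_or_ge (i : ℕ) (sz δ) with hc | hc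
      · rw [(cls_eq0 δ N).mpr (by omega), (cls_eq0 δ N).mpr (by omega)]
        exact (Rb0 _ _).mpr (by omega)
      · have hj1 : (j : ℕ) = sz δ := by omega
        have hi1 : (i : ℕ) = sz δ + 1 := by omega
        rw [(cls_eq2 δ N).mpr hi1, (cls_eq1 δ N).mpr hj1]
        exact Rb_symm _ _ _ ▸ (Rb1 _ _).mpr (by omega)
  edge_vert := by rintro i j ⟨hi, _, _⟩; exact hi
  symm := by constructor; rintro i j ⟨hi, hj, hp⟩; exact ⟨hj, hi, by omega⟩

lemma M0_matching (hδ : 3 ≤ δ) : (M0 δ N hδ).IsMatching := by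
  rintro v hv
  have hvlt : (v : ℕ) < sz δ + 2 := hv
  have hnn : sz δ + 2 ≤ nn δ N := by have := k1_ge δ N hδ; unfold nn; omega
  have hse := sz_even δ hδ
  by_cases hpar : (v : ℕ) % 2 = 0
  · refine ⟨fi δ N ((v : ℕ) + 1), ⟨hvlt, ?_, Or.inl ⟨?_, hpar⟩⟩, ?_⟩
    · rw [val_fi δ N (x := (v : ℕ) + 1) (by omega)]
      omega
    · rw [val_fi δ N (x := (v : ℕ) + 1) (by omega)]
    · rintro y ⟨hy1, hy2, hy3⟩
      apply Fin.val_injective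
      rw [val_fi δ N (x := (v : ℕ) + 1) (by omega)]
      omega
  · refine ⟨fi δ N ((v : ℕ) - 1), ⟨hvlt, ?_, Or.inr ⟨?_, ?_⟩⟩, ?_⟩
    · rw [val_fi δ N (x := (v : ℕ) - 1) (by omega)]; omega
    · rw [val_fi δ N (x := (v : ℕ) - 1) (by omega)]; omega
    · rw [val_fi δ N (x := (v : ℕ) - 1) (by omega)]; omega
    · rintro y ⟨hy1, hy2, hy3⟩
      apply Fin.val_injective
      rw [val_fi δ N (x := (v : ℕ) - 1) (by omega)]
      omega

lemma M0_maximal (hδ : 3 ≤ δ) : IsMaximalMatching (G δ N) (M0 δ N hδ) := by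
  refine ⟨M0_matching δ N hδ, ?_⟩
  intro M' hM' hsub
  apply Set.Subset.antisymm hsub
  have key : ∀ x y : Fin (nn δ N), M'.Adj x y → (x : ℕ) < sz δ + 2 →
      s(x, y) ∈ (M0 δ N hδ).edgeSet := by
    intro x y hadj hx
    obtain ⟨w, hw, huniq⟩ := M0_matching δ N hδ (show x ∈ (M0 δ N hδ).verts from hx)
    have hw' : M'.Adj x w := Subgraph.mem_edgeSet.mp (hsub (Subgraph.mem_edgeSet.mpr hw))
    have hyw : y = w := by
      obtain ⟨z, hz, huniq'⟩ := hM' hadj.fst_mem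
      rw [huniq' y hadj, huniq' w hw']
    rw [hyw]
    exact Subgraph.mem_edgeSet.mpr hw
  intro e he
  induction e with
  | _ x y =>
    have hadj : M'.Adj x y := Subgraph.mem_edgeSet.mp he
    have hG := M'.adj_sub hadj
    rcases Rb_le _ hG.2 with hc | hc
    · exact key x y hadj ((cls_le2 δ N).mp hc)
    · rw [Sym2.eq_swap]
      exact key y x hadj.symm ((cls_le2 δ N).mp hc)

lemma M0_ncard (hδ : 3 ≤ δ) : (M0 δ N hδ).edgeSet.ncard = (sz δ + 2) / 2 := by
  have hse := sz_even δ hδ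
  have hnn : sz δ + 2 ≤ nn δ N := by have := k1_ge δ N hδ; unfold nn; omega
  have heq : (M0 δ N hδ).edgeSet
      = (fun p : ℕ => s(fi δ N (2 * p), fi δ N (2 * p + 1))) '' Set.Iio ((sz δ + 2) / 2) := by
    ext e
    induction e with
    | _ x y =>
      simp only [Set.mem_image, Set.mem_Iio]
      constructor
      · intro he
        obtain ⟨hx, hy, hp⟩ := Subgraph.mem_edgeSet.mp he
        rcases hp with ⟨h1, h2⟩ | ⟨h1, h2⟩
        · refine ⟨(x : ℕ) / 2, by omega, ?_⟩
          have e1 : fi δ N (2 * ((x : ℕ) / 2)) = x :=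
            Fin.val_injective (by rw [val_fi δ N (x := 2 * ((x : ℕ) / 2)) (by omega)]; omega)
          have e2 : fi δ N (2 * ((x : ℕ) / 2) + 1) = y :=
            Fin.val_injective (by rw [val_fi δ N (x := 2 * ((x : ℕ) / 2) + 1) (by omega)]; omega)
          rw [e1, e2]
        · refine ⟨(y : ℕ) / 2, by omega, ?_⟩
          have e1 : fi δ N (2 * ((y : ℕ) / 2)) = y :=
            Fin.val_injective (by rw [val_fi δ N (x := 2 * ((y : ℕ) / 2)) (by omega)]; omega)
          have e2 : fi δ N (2 * ((y : ℕ) / 2) + 1) = x :=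
            Fin.val_injective (by rw [val_fi δ N (x := 2 * ((y : ℕ) / 2) + 1) (by omega)]; omega)
          rw [e1, e2, Sym2.eq_swap]
      · rintro ⟨p, hpm, hpe⟩
        rw [← hpe]
        apply Subgraph.mem_edgeSet.mpr
        refine ⟨?_, ?_, Or.inl ⟨?_, ?_⟩⟩
        · rw [val_fi δ N (x := 2 * p) (by omega)]; omega
        · rw [val_fi δ N (x := 2 * p + 1) (by omega)]; omega
        · rw [val_fi δ N (x := 2 * p) (by omega), val_fi δ N (x := 2 * p + 1) (by omega)]
        · rw [val_fi δ N (x := 2 * p) (by omega)]; omega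
  rw [heq, Set.ncard_image_of_injOn, ← Finset.coe_Iio, Set.ncard_coe_finset, Nat.card_Iio]
  intro p hp q hq hpq
  simp only [Set.mem_Iio] at hp hq
  rcases Sym2.eq_iff.mp hpq with ⟨h1, _⟩ | ⟨h1, h2⟩
  · have := congrArg Fin.val h1
    rw [val_fi δ N (x := 2 * p) (by omega), val_fi δ N (x := 2 * q) (by omega)] at this
    omega
  · have := congrArg Fin.val h1
    rw [val_fi δ N (x := 2 * p) (by omega), val_fi δ N (x := 2 * q + 1) (by omega)] at this
    omega

theorem muStar_eq (hδ : 3 ≤ δ) : muStar (G δ N) = (sz δ + 2) / 2 := by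
  have hse := sz_even δ hδ
  have hk := k1_ge δ N hδ
  have hs := sz_ge δ hδ
  have hmem : (sz δ + 2) / 2 ∈ {n | ∃ M : (G δ N).Subgraph,
      IsMaximalMatching (G δ N) M ∧ M.edgeSet.ncard = n} :=
    ⟨M0 δ N hδ, M0_maximal δ N hδ, M0_ncard δ N hδ⟩
  unfold muStar
  apply le_antisymm (Nat.sInf_le hmem)
  refine le_csInf ⟨_, hmem⟩ ?_
  rintro c ⟨M, ⟨hmat, hmax⟩, rfl⟩
  by_contra hlt
  push_neg at hlt
  have hverts : M.verts.ncard ≤ sz δ := by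
    have := verts_ncard_le hmat
    omega
  have hW1 : ¬ (W1 δ N ⊆ M.verts) := by
    intro hsub
    have := Set.ncard_le_ncard hsub (Set.toFinite _)
    rw [W1_ncard] at this
    omega
  obtain ⟨w, hwW1, hwnot⟩ := Set.not_subset.mp hW1
  have hwcls := W1_cls δ N hwW1
  have hwval := (cls_eq3 δ N).mp hwcls
  by_cases hhub : {j : Fin (nn δ N) | (j : ℕ) ∈ Finset.Iio (sz δ)} ⊆ M.verts
  · have hncH : {j : Fin (nn δ N) | (j : ℕ) ∈ Finset.Iio (sz δ)}.ncard = sz δ := by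
      rw [ncard_val_mem _ (fun x hx => by
        simp only [Finset.mem_Iio] at hx; unfold nn; omega)]
      simp
    have heqH := Set.eq_of_subset_of_ncard_le hhub (by omega)
    have hadj : (G δ N).Adj (fi δ N (sz δ)) w := by
      apply adj_of_val δ N (by rw [val_a δ N hδ]; omega)
      rw [cls_a δ N hδ, hwcls]
      exact (Rb1 _ _).mpr (by omega)
    rcases maximal_no_free_edge ⟨hmat, hmax⟩ hadj with h | h
    · rw [← heqH] at h
      simp only [Set.mem_setOf_eq, Finset.mem_Iio, val_a δ N hδ] at h
      omega
    · exact hwnot h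
  · obtain ⟨h, hhH, hhnot⟩ := Set.not_subset.mp hhub
    simp only [Set.mem_setOf_eq, Finset.mem_Iio] at hhH
    have hadj : (G δ N).Adj h w := by
      apply adj_of_val δ N (by omega)
      rw [(cls_eq0 δ N).mpr hhH, hwcls]
      exact (Rb0 _ _).mpr (by omega)
    rcases maximal_no_free_edge ⟨hmat, hmax⟩ hadj with hcase | hcase
    · exact hhnot hcase
    · exact hwnot hcase

end


lemma nn_gt (δ N : ℕ) (hδ : 3 ≤ δ) : N < nn δ N := by
  unfold nn k1 kk; split_ifs <;> omega

end S4

/-- For every `δ ≥ 3` and every `N` there is a graph on more than `N` vertices with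
minimum degree `δ` and `γ_t(G) = 2 μ*(G) - δ + 2`. -/
theorem statement4 (δ : ℕ) (hδ : 3 ≤ δ) (N : ℕ) :
    ∃ (n : ℕ) (G : SimpleGraph (Fin n)), N < n ∧ minDeg G = δ ∧
      (gammaT G : ℤ) = 2 * (muStar G : ℤ) - (δ : ℤ) + 2 := by
  refine ⟨S4.nn δ N, S4.G δ N, S4.nn_gt δ N hδ, S4.minDeg_eq δ N hδ, ?_⟩
  rw [S4.muStar_eq δ N hδ]
  rcases Nat.even_or_odd δ with hp | hp
  · have hp' : δ % 2 = 0 := Nat.even_iff.mp hp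
    rw [S4.gammaT_even δ N hδ hp']
    have key : 2 * ((S4.sz δ + 2) / 2) = δ := by unfold S4.sz; omega
    have keyZ := congrArg (Nat.cast : ℕ → ℤ) key
    push_cast at keyZ
    omega
  · have hp' : δ % 2 = 1 := Nat.odd_iff.mp hp
    rw [S4.gammaT_odd δ N hδ hp']
    have key : 2 * ((S4.sz δ + 2) / 2) = δ + 1 := by unfold S4.sz; omega
    have keyZ := congrArg (Nat.cast : ℕ → ℤ) key
    push_cast at keyZ
    omega


end TotalDomMM
end

section
/- Let G be a finite simple graph with no isolated vertices and 1 ≤ δ(G) ≤ 2 satisfying γ_t(G) = 2μ*(G). Then G has a maximal matching M that can be partitioned as M = M⁺ ∪ M⁻ ∪ M* such that: (i) M⁺ is a perfect matching of the subgraph of G induced by S⁺(G); (ii) every vertex of S⁻(G) is covered by M⁻ and every edge of M⁻ joins a vertex of S⁻(G) to a vertex of V(G) \ sup(G); (iii) for every vertex v ∈ S⁻(G) ∪ V(M*), the partner M_p(v) is the unique neighbor of v among the vertices of V(M); (iv) for every two distinct vertices u, v ∈ S⁻(G) ∪ V(M*), if u and v have a common neighbor then there exists a vertex whose neighborhood is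 exactly {M_p(u), M_p(v)}. -/
open SimpleGraph

namespace TotalDomMM

variable {V : Type*}

section Proof
set_option linter.unusedSectionVars false

variable [Fintype V] {G : SimpleGraph V}

private lemma sym2_ncard_le (s : Set (Sym2 V)) :
    ({x | ∃ e ∈ s, x ∈ e} : Set V).ncard ≤ 2 * s.ncard := by
  classical
  refine Set.Finite.induction_on (motive := fun s _ => ({x | ∃ e ∈ s, x ∈ e} : Set V).ncard ≤ 2 * s.ncard) s (s.toFinite) (by simp) ?_
  intro e s hnm hfin ih
  have h1 : {x | ∃ e' ∈ insert e s, x ∈ e'} = {x | x ∈ e} ∪ {x | ∃ e' ∈ s, x ∈ e'} := by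
    ext x; simp [or_and_right, exists_or]
  rw [h1, Set.ncard_insert_of_notMem hnm hfin]
  have h2 : ({x | x ∈ e} : Set V).ncard ≤ 2 := by
    induction e using Sym2.ind with
    | _ a b =>
      have hab : ({x | x ∈ s(a, b)} : Set V) = {a, b} := by ext x; simp [Sym2.mem_iff]
      rw [hab]
      calc ({a, b} : Set V).ncard ≤ ({b} : Set V).ncard + 1 := Set.ncard_insert_le _ _
        _ ≤ 2 := by simp
  calc ({x | x ∈ e} ∪ {x | ∃ e' ∈ s, x ∈ e'}).ncard
      ≤ ({x | x ∈ e} : Set V).ncard + ({x | ∃ e' ∈ s, x ∈ e'} : Set V).ncard :=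
        Set.ncard_union_le _ _
    _ ≤ 2 * (s.ncard + 1) := by omega

private lemma exists_maximal_matching' (G : SimpleGraph V) :
    ∃ M : G.Subgraph, IsMaximalMatching G M := by
  classical
  set A := {n | ∃ M : G.Subgraph, M.IsMatching ∧ M.edgeSet.ncard = n} with hA
  have hne : A.Nonempty := by
    refine ⟨0, ⊥, ?_, by simp [Subgraph.edgeSet_bot]⟩
    intro v hv; simp [Subgraph.verts_bot] at hv
  have hbdd : BddAbove A := by
    refine ⟨(Set.univ : Set (Sym2 V)).ncard, ?_⟩
    rintro n ⟨M, _, rfl⟩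
    exact Set.ncard_le_ncard (Set.subset_univ _) (Set.toFinite _)
  obtain ⟨M, hM, hcard⟩ := Nat.sSup_mem hne hbdd
  refine ⟨M, hM, fun M' hM' hsub => ?_⟩
  refine Set.eq_of_subset_of_ncard_le hsub ?_ (Set.toFinite _)
  rw [hcard]
  exact le_csSup hbdd ⟨M', hM', rfl⟩

private lemma exists_min_maximal_matching (G : SimpleGraph V) :
    ∃ M : G.Subgraph, IsMaximalMatching G M ∧ M.edgeSet.ncard = muStar G := by
  obtain ⟨M, hM⟩ := exists_maximal_matching' G
  have hne : {n | ∃ M : G.Subgraph, IsMaximalMatching G M ∧ M.edgeSet.ncard = n}.Nonempty :=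
    ⟨M.edgeSet.ncard, M, hM, rfl⟩
  exact Nat.sInf_mem hne

private lemma verts_ncard_le {M : G.Subgraph} (hM : M.IsMatching) :
    M.verts.ncard ≤ 2 * M.edgeSet.ncard := by
  refine le_trans (Set.ncard_le_ncard ?_ (Set.toFinite _)) (sym2_ncard_le M.edgeSet)
  intro v hv
  obtain ⟨w, hw, -⟩ := hM hv
  exact ⟨s(v, w), Subgraph.mem_edgeSet.mpr hw, Sym2.mem_mk_left _ _⟩

private lemma not_covered_adj {M : G.Subgraph} (hmax : IsMaximalMatching G M) {y z : V}
    (hy : y ∉ M.verts) (hz : z ∉ M.verts) (hyz : G.Adj y z) : False := by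
  have hd : Disjoint M.support (G.subgraphOfAdj hyz).support := by
    rw [hmax.1.support_eq_verts, SimpleGraph.support_subgraphOfAdj]
    rw [Set.disjoint_right]
    intro a ha
    rcases ha with rfl | rfl
    · exact hy
    · exact hz
  have hM' := hmax.1.sup (Subgraph.IsMatching.subgraphOfAdj hyz) hd
  have hsub : M.edgeSet ⊆ (M ⊔ G.subgraphOfAdj hyz).edgeSet := by
    rw [Subgraph.edgeSet_sup]; exact Set.subset_union_left
  have heq2 := hmax.2 _ hM' hsub
  have hmem : s(y, z) ∈ M.edgeSet := by
    rw [heq2, Subgraph.edgeSet_sup, SimpleGraph.edgeSet_subgraphOfAdj]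
    exact Set.mem_union_right _ rfl
  exact hy (Subgraph.mem_edgeSet.mp hmem).fst_mem

private lemma exists_covered_nbr (h : NoIsolated G) {M : G.Subgraph}
    (hmax : IsMaximalMatching G M) (y : V) : ∃ z ∈ M.verts, G.Adj y z := by
  by_cases hy : y ∈ M.verts
  · obtain ⟨w, hw, -⟩ := hmax.1 hy
    exact ⟨w, hw.snd_mem, hw.adj_sub⟩
  · obtain ⟨z, hz⟩ := h y
    by_cases hzv : z ∈ M.verts
    · exact ⟨z, hzv, hz⟩
    · exact (not_covered_adj hmax hy hzv hz).elim

private lemma support_mem_verts (h : NoIsolated G) {M : G.Subgraph}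
    (hmax : IsMaximalMatching G M) {v : V} (hv : v ∈ supSet G) : v ∈ M.verts := by
  obtain ⟨u, hvu, hu1⟩ := hv
  have hNu : G.neighborSet u = {v} := by
    obtain ⟨a, ha⟩ := Set.ncard_eq_one.mp hu1
    have hva : v = a := by
      have hm : v ∈ G.neighborSet u := hvu.symm
      rw [ha, Set.mem_singleton_iff] at hm; exact hm
    rw [hva]; exact ha
  obtain ⟨z, hz, huz⟩ := exists_covered_nbr h hmax u
  have hzv : z ∈ G.neighborSet u := huz
  rw [hNu, Set.mem_singleton_iff] at hzv
  rwa [hzv] at hz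

private lemma gammaT_le {S : Set V} (hS : IsTotalDomSet G S) : gammaT G ≤ S.ncard :=
  Nat.sInf_le ⟨S, hS, rfl⟩

private lemma partner_support (h : NoIsolated G) (heq : gammaT G = 2 * muStar G)
    {M : G.Subgraph} (hmax : IsMaximalMatching G M) (hcard : M.edgeSet.ncard = muStar G)
    {v v' u : V} (hvv' : M.Adj v v') (hu : u ∈ M.verts) (hadj : G.Adj v u) (hne : u ≠ v') :
    v' ∈ supSet G := by
  by_contra hno
  have hv'm : v' ∈ M.verts := hvv'.snd_mem
  have hTDS : IsTotalDomSet G (M.verts \ {v'}) := by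
    intro y
    by_cases hy : y ∈ M.verts
    · obtain ⟨w, hw, -⟩ := hmax.1 hy
      by_cases hwv : w = v'
      · have hyv : y = v := by
          subst hwv
          exact (hmax.1 hv'm).unique hw.symm hvv'.symm
        subst hyv
        exact ⟨u, ⟨hu, hne⟩, hadj⟩
      · exact ⟨w, ⟨hw.snd_mem, hwv⟩, hw.adj_sub⟩
    · by_contra hfail
      push_neg at hfail
      apply hno
      have hNy : G.neighborSet y = {v'} := by
        ext x
        simp only [mem_neighborSet, Set.mem_singleton_iff]
        constructor
        · intro hx
          by_contra hxne
          have hxv : x ∈ M.verts := by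
            by_contra hxm
            exact not_covered_adj hmax hy hxm hx
          exact hfail x ⟨hxv, hxne⟩ hx
        · intro hx
          obtain ⟨z, hz, hyz⟩ := exists_covered_nbr h hmax y
          have hzv : z = v' := by
            by_contra hzne
            exact hfail z ⟨hz, hzne⟩ hyz
          rw [hx, ← hzv]; exact hyz
      have hyadj : G.Adj v' y := by
        have : v' ∈ G.neighborSet y := by rw [hNy]; rfl
        exact this.symm
      exact ⟨y, hyadj, by rw [hNy]; simp⟩
  have hle := gammaT_le hTDS
  rw [Set.ncard_diff_singleton_of_mem hv'm] at hle
  have hc2 := verts_ncard_le hmax.1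
  have hc3 : 0 < M.verts.ncard := (Set.ncard_pos (Set.toFinite _)).mpr ⟨v', hv'm⟩
  rw [heq, ← hcard] at hle
  omega

private lemma edge_eq {M : G.Subgraph} (hM : M.IsMatching) {e : Sym2 V}
    (he : e ∈ M.edgeSet) {v : V} (hv : v ∈ e) {w : V} (hw : M.Adj v w) : e = s(v, w) := by
  induction e using Sym2.ind with
  | _ a b =>
    have hab : M.Adj a b := Subgraph.mem_edgeSet.mp he
    rcases Sym2.mem_iff.mp hv with rfl | rfl
    · rw [(hM hab.fst_mem).unique hab hw]
    · rw [(hM hab.snd_mem).unique hab.symm hw, Sym2.eq_swap]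

end Proof

/-- If `G` is a finite graph with no isolated vertices, `1 ≤ δ(G) ≤ 2` and
`γ_t(G) = 2 μ*(G)`, then `G` has a maximal matching `M = M⁺ ∪ M⁻ ∪ M*` satisfying
conditions (i)-(iv). -/
theorem statement8 [Fintype V] (G : SimpleGraph V)
    (h : NoIsolated G) (h1 : 1 ≤ minDeg G) (h2 : minDeg G ≤ 2)
    (heq : gammaT G = 2 * muStar G) :
    ∃ (M : G.Subgraph) (Mp Mm Ms : Set (Sym2 V)),
      IsMaximalMatching G M ∧ PartitionCond G M Mp Mm Ms := by
  classical
  obtain ⟨M, hmax, hcard⟩ := exists_min_maximal_matching G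
  set Mp : Set (Sym2 V) := {e | e ∈ M.edgeSet ∧ ∀ x ∈ e, x ∈ supPlus G} with hMpDef
  set Mm : Set (Sym2 V) := {e | e ∈ M.edgeSet ∧ e ∉ Mp ∧ ∃ x ∈ e, x ∈ supMinus G} with hMmDef
  set Ms : Set (Sym2 V) := {e | e ∈ M.edgeSet ∧ e ∉ Mp ∧ ¬∃ x ∈ e, x ∈ supMinus G} with hMsDef
  have hC2 : ∀ {v w : V}, v ∈ supPlus G → M.Adj v w → w ∈ supPlus G := by
    intro v w hv hvw
    obtain ⟨hvs, s, hs, hadj⟩ := hv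
    by_cases hsw : s = w
    · subst hsw; exact ⟨hs, v, hvs, hvw.adj_sub.symm⟩
    · exact ⟨partner_support h heq hmax hcard hvw (support_mem_verts h hmax hs) hadj hsw,
        v, hvs, hvw.adj_sub.symm⟩
  have haux : ∀ {v w : V}, v ∈ supMinus G ∪ edgeVerts Ms → M.Adj v w → w ∉ supSet G := by
    intro v w hv hvw hws
    rcases hv with hv | hv
    · exact hv.2 ⟨hv.1, w, hws, hvw.adj_sub⟩
    · obtain ⟨e, heMs, hve⟩ := hv
      have he : e = s(v, w) := edge_eq hmax.1 heMs.1 hve hvw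
      obtain ⟨heM, hnp, hnm⟩ := heMs
      by_cases hwp : w ∈ supPlus G
      · refine hnp ⟨heM, ?_⟩
        intro x hx
        rw [he, Sym2.mem_iff] at hx
        rcases hx with rfl | rfl
        · exact hC2 hwp hvw.symm
        · exact hwp
      · exact hnm ⟨w, by rw [he]; exact Sym2.mem_mk_right _ _, ⟨hws, hwp⟩⟩
  have hfree : ∀ v ∈ supMinus G ∪ edgeVerts Ms, ∀ w, M.Adj v w →
      ∀ u ∈ M.verts, G.Adj v u → u = w := by
    intro v hv w hvw u hu hadj
    by_contra hne
    exact haux hv hvw (partner_support h heq hmax hcard hvw hu hadj hne)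
  refine ⟨M, Mp, Mm, Ms, hmax, ?_, ?_, ?_, ?_, ?_, ?_, ?_, ?_, hfree, ?_⟩
  · -- union
    ext e
    constructor
    · rintro ((hp | hm) | hs)
      exacts [hp.1, hm.1, hs.1]
    · intro he
      by_cases hp : e ∈ Mp
      · exact Or.inl (Or.inl hp)
      · by_cases hm : ∃ x ∈ e, x ∈ supMinus G
        · exact Or.inl (Or.inr ⟨he, hp, hm⟩)
        · exact Or.inr ⟨he, hp, hm⟩
  · exact Set.disjoint_left.mpr fun _e hp hm => hm.2.1 hp
  · exact Set.disjoint_left.mpr fun _e hp hs => hs.2.1 hp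
  · exact Set.disjoint_left.mpr fun _e hm hs => hs.2.2 hm.2.2
  · -- (i) edges of Mp are inside supPlus
    intro u v hp
    exact hp.2 u (Sym2.mem_mk_left _ _)
  · -- (i) supPlus covered by Mp
    intro v hv
    have hvm := support_mem_verts h hmax hv.1
    obtain ⟨w, hw, -⟩ := hmax.1 hvm
    refine ⟨s(v, w), ⟨Subgraph.mem_edgeSet.mpr hw, ?_⟩, Sym2.mem_mk_left _ _⟩
    intro x hx
    rw [Sym2.mem_iff] at hx
    rcases hx with rfl | rfl
    · exact hv
    · exact hC2 hv hw
  · -- (ii) supMinus covered by Mm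
    intro v hv
    have hvm := support_mem_verts h hmax hv.1
    obtain ⟨w, hw, -⟩ := hmax.1 hvm
    have hp : s(v, w) ∉ Mp := fun hc => hv.2 (hc.2 v (Sym2.mem_mk_left _ _))
    exact ⟨s(v, w), ⟨Subgraph.mem_edgeSet.mpr hw, hp, v, Sym2.mem_mk_left _ _, hv⟩,
      Sym2.mem_mk_left _ _⟩
  · -- (ii) edges of Mm join supMinus and non-support
    intro u v hm
    obtain ⟨he, hnp, x, hx, hxm⟩ := hm
    have huv : M.Adj u v := Subgraph.mem_edgeSet.mp he
    rw [Sym2.mem_iff] at hx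
    rcases hx with rfl | rfl
    · exact Or.inl ⟨hxm, haux (Or.inl hxm) huv⟩
    · exact Or.inr ⟨hxm, haux (Or.inl hxm) huv.symm⟩
  · -- (iv)
    intro u v hu hv hne hcom u' v' huu' hvv'
    obtain ⟨w, hwu, hwv⟩ := hcom
    have hu'v' : u' ≠ v' := by
      rintro rfl
      exact hne ((hmax.1 huu'.snd_mem).unique huu'.symm hvv'.symm)
    have hwm : w ∉ M.verts := by
      intro hwm
      have h1 := hfree u hu u' huu' w hwm hwu
      have h2 := hfree v hv v' hvv' w hwm hwv
      exact hu'v' (by rw [← h1, ← h2])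
    have hsub2 : ({u', v'} : Set V) ⊆ M.verts := by
      intro x hx
      rcases hx with rfl | rfl
      · exact huu'.snd_mem
      · exact hvv'.snd_mem
    have hnT : ¬ IsTotalDomSet G ((M.verts \ {u', v'}) ∪ {w}) := by
      intro hT
      have hle := gammaT_le hT
      have hc1 : ((M.verts \ {u', v'}) ∪ {w} : Set V).ncard ≤ M.verts.ncard - 2 + 1 := by
        calc ((M.verts \ {u', v'}) ∪ {w} : Set V).ncard
            ≤ (M.verts \ {u', v'}).ncard + ({w} : Set V).ncard := Set.ncard_union_le _ _
          _ = M.verts.ncard - 2 + 1 := by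
              rw [Set.ncard_singleton, Set.ncard_diff hsub2 (Set.toFinite _),
                Set.ncard_pair hu'v']
      have hc2 := verts_ncard_le hmax.1
      have hc3 : 0 < M.verts.ncard := (Set.ncard_pos (Set.toFinite _)).mpr ⟨u', huu'.snd_mem⟩
      rw [heq, ← hcard] at hle
      omega
    rw [IsTotalDomSet] at hnT
    push_neg at hnT
    obtain ⟨x, hx⟩ := hnT
    have hxm : x ∉ M.verts := by
      intro hxm
      obtain ⟨p, hp, -⟩ := hmax.1 hxm
      have hpuv : p = u' ∨ p = v' := by
        by_contra hc
        push_neg at hc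
        exact hx p (Or.inl ⟨hp.snd_mem, by simp [hc.1, hc.2]⟩) hp.adj_sub
      have hxuv : x = u ∨ x = v := by
        rcases hpuv with rfl | rfl
        · exact Or.inl ((hmax.1 huu'.snd_mem).unique hp.symm huu'.symm)
        · exact Or.inr ((hmax.1 hvv'.snd_mem).unique hp.symm hvv'.symm)
      have hxw : G.Adj x w := by
        rcases hxuv with rfl | rfl
        exacts [hwu, hwv]
      exact hx w (Or.inr rfl) hxw
    have hNx : ∀ z, G.Adj x z → z = u' ∨ z = v' := by
      intro z hz
      have hzm : z ∈ M.verts := by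
        by_contra hzm
        exact not_covered_adj hmax hxm hzm hz
      by_contra hc
      push_neg at hc
      exact hx z (Or.inl ⟨hzm, by simp [hc.1, hc.2]⟩) hz
    have key : ∀ (a b : V) (ha : a ∈ supMinus G ∪ edgeVerts Ms) (haa : M.Adj a b),
        (∀ z, G.Adj x z → z = b) → False := by
      intro a b ha haa hall
      have hNxb : G.neighborSet x = {b} := by
        ext z
        simp only [mem_neighborSet, Set.mem_singleton_iff]
        constructor
        · exact hall z
        · intro hzb
          obtain ⟨z', hz'm, hxz'⟩ := exists_covered_nbr h hmax x
          rw [hzb, ← hall z' hxz']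
          exact hxz'
      have hbs : b ∈ supSet G := by
        refine ⟨x, ?_, by rw [hNxb]; simp⟩
        have : b ∈ G.neighborSet x := by rw [hNxb]; rfl
        exact this.symm
      exact haux ha haa hbs
    have hu'x : G.Adj x u' := by
      by_contra hnu
      refine key v v' hv hvv' ?_
      intro z hz
      rcases hNx z hz with rfl | rfl
      · exact absurd hz hnu
      · rfl
    have hv'x : G.Adj x v' := by
      by_contra hnv
      refine key u u' hu huu' ?_
      intro z hz
      rcases hNx z hz with rfl | rfl
      · rfl
      · exact absurd hz hnv
    refine ⟨x, ?_⟩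
    ext z
    simp only [mem_neighborSet, Set.mem_insert_iff, Set.mem_singleton_iff]
    constructor
    · exact hNx z
    · rintro (rfl | rfl)
      exacts [hu'x, hv'x]


end TotalDomMM
end

section
/- Let G be a finite simple graph with no isolated vertices. Suppose G has a maximal matching M that can be partitioned as M = M⁺ ∪ M⁻ ∪ M* such that: (i) M⁺ is a perfect matching of the subgraph of G induced by S⁺(G); (ii) every vertex of S⁻(G) is covered by M⁻ and every edge of M⁻ joins a vertex of S⁻(G) to a vertex of V(G) \ sup(G); (iii) for every vertex v ∈ S⁻(G) ∪ V(M*), the partner M_p(v) is the unique neighbor of v among the vertices of V(M); (iv) for every two distinct vertices u, v ∈ S⁻(G) ∪ V(M*), if u and v have a common neighbor then there exists a vertex whose neighborhood is exactly {M_p(u), M_p(v)}. Then γ_t(G) = 2μ*(G). -/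
open SimpleGraph

namespace TotalDomMM

variable {V : Type*}

section Aux

variable {G : SimpleGraph V} {M : G.Subgraph}

lemma edge_unique_of_matching (hm : M.IsMatching) {e₁ e₂ : Sym2 V}
    (h1 : e₁ ∈ M.edgeSet) (h2 : e₂ ∈ M.edgeSet) {v : V} (hv1 : v ∈ e₁) (hv2 : v ∈ e₂) :
    e₁ = e₂ := by
  obtain ⟨b, rfl⟩ := Sym2.mem_iff_exists.mp hv1
  obtain ⟨d, rfl⟩ := Sym2.mem_iff_exists.mp hv2
  rw [SimpleGraph.Subgraph.mem_edgeSet] at h1 h2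
  obtain ⟨w, -, hu⟩ := hm (M.edge_vert h1)
  rw [hu b h1, hu d h2]

open Classical in
/-- The partner of a vertex in a matching. -/
noncomputable def pr (hm : M.IsMatching) (v : V) : V :=
  if h : v ∈ M.verts then (hm h).exists.choose else v

lemma pr_adj (hm : M.IsMatching) {v : V} (hv : v ∈ M.verts) : M.Adj v (pr hm v) := by
  classical
  rw [pr, dif_pos hv]; exact (hm hv).exists.choose_spec

lemma eq_pr (hm : M.IsMatching) {v w : V} (hv : v ∈ M.verts) (h : M.Adj v w) :
    w = pr hm v := by
  obtain ⟨u, -, hu⟩ := hm hv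
  exact (hu w h).trans (hu _ (pr_adj hm hv)).symm

lemma pr_mem (hm : M.IsMatching) {v : V} (hv : v ∈ M.verts) : pr hm v ∈ M.verts :=
  M.edge_vert (M.adj_symm (pr_adj hm hv))

lemma pr_pr (hm : M.IsMatching) {v : V} (hv : v ∈ M.verts) : pr hm (pr hm v) = v :=
  (eq_pr hm (pr_mem hm hv) (M.adj_symm (pr_adj hm hv))).symm

lemma matching_verts_ncard [Fintype V] (hm : M.IsMatching) :
    M.verts.ncard = 2 * M.edgeSet.ncard := by
  classical
  have hE : M.verts.toFinset = M.edgeSet.toFinset.biUnion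
      (fun e => Finset.univ.filter (· ∈ e)) := by
    ext x
    simp only [Set.mem_toFinset, Finset.mem_biUnion, Finset.mem_filter, Finset.mem_univ,
      true_and]
    constructor
    · intro hx
      obtain ⟨w, hw, -⟩ := hm hx
      exact ⟨s(x, w), hw, Sym2.mem_mk_left x w⟩
    · rintro ⟨e, he, hxe⟩
      exact SimpleGraph.Subgraph.mem_verts_of_mem_edge he hxe
  have hcard2 : ∀ e ∈ M.edgeSet.toFinset, (Finset.univ.filter (· ∈ e)).card = 2 := by
    intro e he
    rw [Set.mem_toFinset] at he
    induction e using Sym2.ind with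
    | _ a b =>
      have hab : a ≠ b :=
        (M.adj_sub (SimpleGraph.Subgraph.mem_edgeSet.mp he)).ne
      have hset : Finset.univ.filter (· ∈ s(a, b)) = {a, b} := by
        ext x
        simp [Sym2.mem_iff]
      rw [hset, Finset.card_insert_of_notMem (by simpa using hab), Finset.card_singleton]
  rw [Set.ncard_eq_toFinset_card', hE, Finset.card_biUnion, Finset.sum_congr rfl hcard2,
    Finset.sum_const, smul_eq_mul, mul_comm, Set.ncard_eq_toFinset_card']
  intro e₁ h1 e₂ h2 hne
  rw [Finset.mem_coe, Set.mem_toFinset] at h1 h2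
  refine Finset.disjoint_left.mpr ?_
  intro x hx1 hx2
  simp only [Finset.mem_filter, Finset.mem_univ, true_and] at hx1 hx2
  exact hne (edge_unique_of_matching hm h1 h2 hx1 hx2)

lemma maximal_matching_tds (h : NoIsolated G) (hM : IsMaximalMatching G M) :
    IsTotalDomSet G M.verts := by
  intro v
  by_cases hv : v ∈ M.verts
  · obtain ⟨w, hw, -⟩ := hM.1 hv
    exact ⟨w, M.edge_vert (M.adj_symm hw), M.adj_sub hw⟩
  · obtain ⟨u, hu⟩ := h v
    by_cases huM : u ∈ M.verts
    · exact ⟨u, huM, hu⟩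
    exfalso
    have hd : Disjoint M.support (G.subgraphOfAdj hu).support := by
      rw [hM.1.support_eq_verts, SimpleGraph.support_subgraphOfAdj]
      refine Set.disjoint_right.mpr ?_
      intro x hx
      rcases hx with rfl | hx
      · exact hv
      · rw [Set.mem_singleton_iff] at hx; subst hx; exact huM
    have hm' := hM.1.sup (SimpleGraph.Subgraph.IsMatching.subgraphOfAdj hu) hd
    have hsub : M.edgeSet ⊆ (M ⊔ G.subgraphOfAdj hu).edgeSet := by
      rw [SimpleGraph.Subgraph.edgeSet_sup]; exact Set.subset_union_left
    have heq := hM.2 _ hm' hsub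
    have hmem : s(v, u) ∈ M.edgeSet := by
      rw [heq, SimpleGraph.Subgraph.edgeSet_sup, SimpleGraph.edgeSet_subgraphOfAdj]
      exact Or.inr rfl
    exact hv (M.edge_vert (SimpleGraph.Subgraph.mem_edgeSet.mp hmem))

end Aux

section Lower

variable {G : SimpleGraph V} {M : G.Subgraph}

lemma lower_bound [Fintype V] {Mp Mm Ms : Set (Sym2 V)} (hm : M.IsMatching)
    (hpart : PartitionCond G M Mp Mm Ms) {S : Set V} (hS : IsTotalDomSet G S) :
    M.verts.ncard ≤ S.ncard := by
  classical
  obtain ⟨hUnion, hDpm, hDps, hDms, hMpPlus, -, hMinusSub, hMmSpec, hIII, hIV⟩ := hpart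
  have hMpE : Mp ⊆ M.edgeSet := by
    rw [← hUnion]; exact Set.subset_union_left.trans Set.subset_union_left
  have hMmE : Mm ⊆ M.edgeSet := by
    rw [← hUnion]; exact Set.subset_union_right.trans Set.subset_union_left
  have hMsE : Ms ⊆ M.edgeSet := by
    rw [← hUnion]; exact Set.subset_union_right
  have hEV : ∀ {X : Set (Sym2 V)}, X ⊆ M.edgeSet → edgeVerts X ⊆ M.verts := by
    rintro X hX v ⟨e, he, hve⟩
    exact SimpleGraph.Subgraph.mem_verts_of_mem_edge (hX he) hve
  -- support vertices belong to every total dominating set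
  have hsupS : supSet G ⊆ S := by
    rintro v ⟨u, hadj, hdeg⟩
    obtain ⟨s, hsS, hus⟩ := hS u
    obtain ⟨a, ha⟩ := Set.ncard_eq_one.mp hdeg
    have hv' : v = a := by
      have hmem : v ∈ G.neighborSet u := hadj.symm
      rwa [ha, Set.mem_singleton_iff] at hmem
    have hs' : s = a := by
      have hmem : s ∈ G.neighborSet u := hus
      rwa [ha, Set.mem_singleton_iff] at hmem
    rw [hv', ← hs']; exact hsS
  have hTM : supMinus G ∪ edgeVerts Ms ⊆ M.verts :=
    Set.union_subset (hMinusSub.trans (hEV hMmE)) (hEV hMsE)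
  -- the choice function f
  have hfex : ∀ t : V, ∃ s : V, t ∈ supMinus G ∪ edgeVerts Ms →
      s ∈ S ∧ G.Adj t s ∧ (s = pr hm t ∨ (s ∉ M.verts ∧ pr hm t ∉ S)) := by
    intro t
    by_cases ht : t ∈ supMinus G ∪ edgeVerts Ms
    · by_cases hpt : pr hm t ∈ S
      · exact ⟨pr hm t, fun _ => ⟨hpt, M.adj_sub (pr_adj hm (hTM ht)), Or.inl rfl⟩⟩
      · obtain ⟨s, hsS, hts⟩ := hS t
        refine ⟨s, fun _ => ⟨hsS, hts, Or.inr ⟨fun hsM => ?_, hpt⟩⟩⟩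
        exact hpt ((hIII t ht (pr hm t) (pr_adj hm (hTM ht)) s hsM hts) ▸ hsS)
    · exact ⟨t, fun h => absurd h ht⟩
  choose f hfspec using hfex
  -- injectivity of f on supMinus ∪ edgeVerts Ms
  have hfinj : ∀ t₁ ∈ supMinus G ∪ edgeVerts Ms, ∀ t₂ ∈ supMinus G ∪ edgeVerts Ms,
      t₁ ≠ t₂ → f t₁ ≠ f t₂ := by
    intro t₁ h₁ t₂ h₂ hne heq
    obtain ⟨hS1, hadj1, hc1⟩ := hfspec t₁ h₁
    obtain ⟨hS2, hadj2, hc2⟩ := hfspec t₂ h₂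
    rcases hc1 with he1 | ⟨hn1, hp1⟩ <;> rcases hc2 with he2 | ⟨hn2, hp2⟩
    · apply hne
      have hpp : pr hm t₁ = pr hm t₂ := by rw [← he1, ← he2, heq]
      calc t₁ = pr hm (pr hm t₁) := (pr_pr hm (hTM h₁)).symm
        _ = pr hm (pr hm t₂) := by rw [hpp]
        _ = t₂ := pr_pr hm (hTM h₂)
    · exact hn2 (by rw [← heq, he1]; exact pr_mem hm (hTM h₁))
    · exact hn1 (by rw [heq, he2]; exact pr_mem hm (hTM h₂))
    · obtain ⟨x, hx⟩ := hIV t₁ t₂ h₁ h₂ hne ⟨f t₁, hadj1, heq ▸ hadj2⟩ (pr hm t₁) (pr hm t₂)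
        (pr_adj hm (hTM h₁)) (pr_adj hm (hTM h₂))
      obtain ⟨s, hsS, hxs⟩ := hS x
      have hmem : s ∈ G.neighborSet x := hxs
      rw [hx, Set.mem_insert_iff, Set.mem_singleton_iff] at hmem
      rcases hmem with rfl | rfl
      · exact hp1 hsS
      · exact hp2 hsS
  -- partner stays in the same part
  have hsamePart : ∀ (X : Set (Sym2 V)), X ⊆ M.edgeSet →
      ∀ v ∈ edgeVerts X, pr hm v ∈ edgeVerts X := by
    rintro X hX v ⟨e, heX, hve⟩
    obtain ⟨b, rfl⟩ := Sym2.mem_iff_exists.mp hve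
    have hadj : M.Adj v b := SimpleGraph.Subgraph.mem_edgeSet.mp (hX heX)
    have hb : b = pr hm v := eq_pr hm (M.edge_vert hadj) hadj
    exact ⟨_, heX, hb ▸ Sym2.mem_mk_right v b⟩
  -- a vertex cannot lie in two disjoint parts
  have hconf : ∀ {X Y : Set (Sym2 V)}, X ⊆ M.edgeSet → Y ⊆ M.edgeSet → Disjoint X Y →
      ∀ v, v ∈ edgeVerts X → v ∈ edgeVerts Y → False := by
    rintro X Y hX hY hd v ⟨e₁, h1, hv1⟩ ⟨e₂, h2, hv2⟩
    have hee := edge_unique_of_matching hm (hX h1) (hY h2) hv1 hv2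
    exact Set.disjoint_left.mp hd h1 (hee ▸ h2)
  have hMpVerts : ∀ v ∈ edgeVerts Mp, v ∈ supPlus G := by
    rintro v ⟨e, he, hve⟩
    obtain ⟨b, rfl⟩ := Sym2.mem_iff_exists.mp hve
    exact hMpPlus v b he
  -- the injection g
  set g : V → V := fun v =>
    if v ∈ edgeVerts Mp then v
    else if v ∈ supMinus G then v
    else if v ∈ edgeVerts Ms then f v
    else f (pr hm v) with hg
  have hchar : ∀ v ∈ M.verts,
      (g v = v ∧ (v ∈ edgeVerts Mp ∨ v ∈ supMinus G)) ∨
      (∃ t, t ∈ supMinus G ∪ edgeVerts Ms ∧ g v = f t ∧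
        ((t = v ∧ v ∈ edgeVerts Ms) ∨ (t ∈ supMinus G ∧ pr hm t = v))) := by
    intro v hv
    by_cases h1 : v ∈ edgeVerts Mp
    · refine Or.inl ⟨?_, Or.inl h1⟩
      rw [hg]; simp only [if_pos h1]
    by_cases h2 : v ∈ supMinus G
    · refine Or.inl ⟨?_, Or.inr h2⟩
      rw [hg]; simp only [if_neg h1, if_pos h2]
    by_cases h3 : v ∈ edgeVerts Ms
    · refine Or.inr ⟨v, Set.mem_union_right _ h3, ?_, Or.inl ⟨rfl, h3⟩⟩
      rw [hg]; simp only [if_neg h1, if_neg h2, if_pos h3]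
    · obtain ⟨w, hw, -⟩ := hm hv
      have hedge : s(v, w) ∈ M.edgeSet := hw
      rw [← hUnion] at hedge
      have hmm : s(v, w) ∈ Mm := by
        rcases hedge with (hmp | hmm) | hms
        · exact absurd ⟨_, hmp, Sym2.mem_mk_left v w⟩ h1
        · exact hmm
        · exact absurd ⟨_, hms, Sym2.mem_mk_left v w⟩ h3
      have hwp : w = pr hm v := eq_pr hm hv hw
      rcases hMmSpec v w hmm with ⟨hvm, -⟩ | ⟨hwm, -⟩
      · exact absurd hvm h2
      · refine Or.inr ⟨pr hm v, Set.mem_union_left _ (hwp ▸ hwm), ?_,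
          Or.inr ⟨hwp ▸ hwm, pr_pr hm hv⟩⟩
        rw [hg]; simp only [if_neg h1, if_neg h2, if_neg h3]
  -- mixed case helper
  have mixed : ∀ v₁ ∈ M.verts, ∀ v₂ : V, (v₁ ∈ edgeVerts Mp ∨ v₁ ∈ supMinus G) →
      ∀ t₂ ∈ supMinus G ∪ edgeVerts Ms,
      ((t₂ = v₂ ∧ v₂ ∈ edgeVerts Ms) ∨ (t₂ ∈ supMinus G ∧ pr hm t₂ = v₂)) →
      v₁ ≠ v₂ → v₁ = f t₂ → False := by
    intro v₁ hv₁ v₂ hd1 t₂ ht₂ hspec2 hne h1f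
    obtain ⟨-, -, hc2⟩ := hfspec t₂ ht₂
    rcases hc2 with he2 | ⟨hn2, -⟩
    · have hv1p : v₁ = pr hm t₂ := by rw [h1f, he2]
      rcases hspec2 with ⟨ht2v, hms⟩ | ⟨hsm, hpt⟩
      · have hv1ms : v₁ ∈ edgeVerts Ms := by
          rw [hv1p, ht2v]; exact hsamePart Ms hMsE v₂ hms
        rcases hd1 with hmp | hsmv
        · exact hconf hMpE hMsE hDps v₁ hmp hv1ms
        · exact hconf hMmE hMsE hDms v₁ (hMinusSub hsmv) hv1ms
      · exact hne (hv1p.trans hpt)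
    · exact hn2 (h1f ▸ hv₁)
  have hginj : Set.InjOn g M.verts := by
    intro v₁ hv₁ v₂ hv₂ heq
    by_contra hne
    rcases hchar v₁ hv₁ with ⟨hg1, hd1⟩ | ⟨t₁, ht₁, hg1, hspec1⟩ <;>
      rcases hchar v₂ hv₂ with ⟨hg2, hd2⟩ | ⟨t₂, ht₂, hg2, hspec2⟩
    · exact hne (by rw [← hg1, heq, hg2])
    · exact mixed v₁ hv₁ v₂ hd1 t₂ ht₂ hspec2 hne (by rw [← hg1, heq, hg2])
    · exact mixed v₂ hv₂ v₁ hd2 t₁ ht₁ hspec1 (Ne.symm hne) (by rw [← hg2, ← heq, hg1])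
    · have hff : f t₁ = f t₂ := by rw [← hg1, ← hg2, heq]
      by_cases htt : t₁ = t₂
      · subst htt
        rcases hspec1 with ⟨he1, hms1⟩ | ⟨hsm1, hpt1⟩
        · rcases hspec2 with ⟨he2, hms2⟩ | ⟨hsm2, hpt2⟩
          · exact hne (he1.symm.trans he2)
          · exact hconf hMmE hMsE hDms v₁ (hMinusSub (by rwa [he1] at hsm2)) hms1
        · rcases hspec2 with ⟨he2, hms2⟩ | ⟨hsm2, hpt2⟩
          · exact hconf hMmE hMsE hDms v₂ (hMinusSub (by rwa [he2] at hsm1)) hms2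
          · exact hne (hpt1.symm.trans hpt2)
      · exact hfinj t₁ ht₁ t₂ ht₂ htt hff
  have hgS : ∀ v ∈ M.verts, g v ∈ S := by
    intro v hv
    rcases hchar v hv with ⟨hg1, hd⟩ | ⟨t, ht, hg1, -⟩
    · rw [hg1]
      rcases hd with hmp | hsm
      · exact hsupS (hMpVerts v hmp).1
      · exact hsupS hsm.1
    · rw [hg1]; exact (hfspec t ht).1
  calc M.verts.ncard = (g '' M.verts).ncard := (Set.ncard_image_of_injOn hginj).symm
    _ ≤ S.ncard := Set.ncard_le_ncard (by rintro x ⟨v, hv, rfl⟩; exact hgS v hv)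
        (Set.toFinite S)

end Lower

/-- If a finite graph `G` with no isolated vertices has a maximal matching
`M = M⁺ ∪ M⁻ ∪ M*` satisfying conditions (i)-(iv), then `γ_t(G) = 2 μ*(G)`. -/
theorem statement9 [Fintype V] (G : SimpleGraph V) (h : NoIsolated G)
    (M : G.Subgraph) (Mp Mm Ms : Set (Sym2 V))
    (hM : IsMaximalMatching G M) (hpart : PartitionCond G M Mp Mm Ms) :
    gammaT G = 2 * muStar G := by
  classical
  have hne_mu : {n | ∃ M' : G.Subgraph, IsMaximalMatching G M' ∧ M'.edgeSet.ncard = n}.Nonempty :=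
    ⟨M.edgeSet.ncard, M, hM, rfl⟩
  obtain ⟨M₀, hM₀, hcard₀⟩ := Nat.sInf_mem hne_mu
  have hub : gammaT G ≤ 2 * muStar G := by
    have htds := maximal_matching_tds h hM₀
    have hv₀ : M₀.verts.ncard = 2 * muStar G := by
      rw [matching_verts_ncard hM₀.1, hcard₀]; rfl
    exact le_trans (Nat.sInf_le ⟨M₀.verts, htds, rfl⟩) hv₀.le
  have hlb : 2 * muStar G ≤ gammaT G := by
    have hmuM : muStar G ≤ M.edgeSet.ncard := Nat.sInf_le ⟨M, hM, rfl⟩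
    have hne_g : {n | ∃ S : Set V, IsTotalDomSet G S ∧ S.ncard = n}.Nonempty :=
      ⟨Set.univ.ncard, Set.univ, fun v => (h v).imp fun u hu => ⟨Set.mem_univ u, hu⟩, rfl⟩
    obtain ⟨S₀, hS₀, hScard⟩ := Nat.sInf_mem hne_g
    calc 2 * muStar G ≤ 2 * M.edgeSet.ncard := by omega
      _ = M.verts.ncard := (matching_verts_ncard hM.1).symm
      _ ≤ S₀.ncard := lower_bound hM.1 hpart hS₀
      _ = gammaT G := hScard
  omega

end TotalDomMM
end

section
/- Let G be a graph in the family K (i.e., G has vertex set {u, v, w_1, …, w_n} and edge set {uv, uw_1, vw_1, …, uw_n, vw_n} for some n ≥ 1) or G is the 6-cycle C_6. Then δ(G) = 2 and γ_t(G) = 2μ*(G). -/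
open SimpleGraph

namespace TotalDomMM

variable {V : Type*}

lemma matching_unique {G : SimpleGraph V} {M : G.Subgraph} (h : M.IsMatching)
    {x y z : V} (h1 : M.Adj x y) (h2 : M.Adj x z) : y = z :=
  (h (M.edge_vert h1)).unique h1 h2

lemma sInf_eq_of {s : Set ℕ} {k : ℕ} (h1 : k ∈ s) (h2 : ∀ n ∈ s, k ≤ n) : sInf s = k :=
  le_antisymm (Nat.sInf_le h1) (le_csInf ⟨k, h1⟩ h2)

lemma two_le_ncard_of_mem {α : Type*} {s : Set α} (hs : s.Finite) {a b : α}
    (ha : a ∈ s) (hb : b ∈ s) (hab : a ≠ b) : 2 ≤ s.ncard := by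
  have h : ({a, b} : Set α).ncard ≤ s.ncard := by
    apply Set.ncard_le_ncard _ hs
    intro x hx
    rcases hx with rfl | hx
    · exact ha
    · rcases hx with rfl; exact hb
  rwa [Set.ncard_pair hab] at h

lemma edgeSet_map {G : SimpleGraph V} {H : SimpleGraph W} (f : G →g H) (M : G.Subgraph) :
    (M.map f).edgeSet = Sym2.map f '' M.edgeSet := by
  ext e
  induction e using Sym2.ind with
  | _ x y =>
    simp only [Subgraph.mem_edgeSet, Subgraph.map_adj, Relation.Map, Set.mem_image]
    constructor
    · rintro ⟨a, b, hab, rfl, rfl⟩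
      exact ⟨s(a, b), hab, rfl⟩
    · rintro ⟨e, he, hmap⟩
      induction e using Sym2.ind with
      | _ a b =>
        rw [Sym2.map_pair_eq, Sym2.eq_iff] at hmap
        rcases hmap with ⟨h1, h2⟩ | ⟨h1, h2⟩
        · exact ⟨a, b, he, h1, h2⟩
        · exact ⟨b, a, M.adj_symm he, h2, h1⟩

lemma sup_matching {G : SimpleGraph V} {a b c d : V} (h1 : G.Adj a b) (h2 : G.Adj c d)
    (hca : c ≠ a) (hcb : c ≠ b) (hda : d ≠ a) (hdb : d ≠ b) :
    (G.subgraphOfAdj h1 ⊔ G.subgraphOfAdj h2).IsMatching := by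
  apply (Subgraph.IsMatching.subgraphOfAdj h1).sup (Subgraph.IsMatching.subgraphOfAdj h2)
  rw [support_subgraphOfAdj, support_subgraphOfAdj]
  rw [Set.disjoint_left]
  rintro x (rfl | rfl) hy <;>
    simp only [Set.mem_insert_iff, Set.mem_singleton_iff] at hy <;>
    rcases hy with rfl | rfl
  · exact hca rfl
  · exact hda rfl
  · exact hcb rfl
  · exact hdb rfl

lemma two_le_ncard_totalDom {G : SimpleGraph V} [Finite V] [Nonempty V] {S : Set V}
    (h : IsTotalDomSet G S) : 2 ≤ S.ncard := by
  obtain ⟨v⟩ := ‹Nonempty V›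
  obtain ⟨u, hu, _⟩ := h v
  obtain ⟨t, ht, hadj⟩ := h u
  exact two_le_ncard_of_mem S.toFinite hu ht hadj.ne

/- ### iso invariance -/

section iso

variable {G : SimpleGraph V} {H : SimpleGraph W} (f : G ≃g H)

lemma iso_neighborSet (v : V) : H.neighborSet (f v) = f '' G.neighborSet v := by
  ext w
  constructor
  · intro hw
    refine ⟨f.symm w, ?_, f.apply_symm_apply w⟩
    rw [mem_neighborSet]
    apply f.map_adj_iff.mp
    rw [f.apply_symm_apply]
    exact hw
  · rintro ⟨u, hu, rfl⟩
    exact f.map_adj_iff.mpr hu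

lemma minDeg_set_subset (f : G ≃g H) :
    {k | ∃ v : V, (G.neighborSet v).ncard = k} ⊆ {k | ∃ w : W, (H.neighborSet w).ncard = k} := by
  rintro k ⟨v, rfl⟩
  exact ⟨f v, by rw [iso_neighborSet f, Set.ncard_image_of_injective _ f.injective]⟩

lemma minDeg_eq_iso (f : G ≃g H) : minDeg G = minDeg H := by
  unfold minDeg
  congr 1
  exact Set.Subset.antisymm (minDeg_set_subset f) (minDeg_set_subset f.symm)

lemma totalDom_image {S : Set V} (hS : IsTotalDomSet G S) : IsTotalDomSet H (f '' S) := by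
  intro w
  obtain ⟨u, hu, hadj⟩ := hS (f.symm w)
  refine ⟨f u, ⟨u, hu, rfl⟩, ?_⟩
  have := f.map_adj_iff.mpr hadj
  rwa [f.apply_symm_apply] at this

lemma gammaT_set_subset (f : G ≃g H) :
    {n | ∃ S : Set V, IsTotalDomSet G S ∧ S.ncard = n} ⊆
      {n | ∃ S : Set W, IsTotalDomSet H S ∧ S.ncard = n} := by
  rintro n ⟨S, hS, rfl⟩
  exact ⟨f '' S, totalDom_image f hS, Set.ncard_image_of_injective _ f.injective⟩

lemma gammaT_eq_iso (f : G ≃g H) : gammaT G = gammaT H := by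
  unfold gammaT
  congr 1
  exact Set.Subset.antisymm (gammaT_set_subset f) (gammaT_set_subset f.symm)

lemma sym2_roundtrip (e : Sym2 V) : Sym2.map f.symm.toHom (Sym2.map f.toHom e) = e := by
  induction e using Sym2.ind with
  | _ a b => simp

lemma sym2_roundtrip' (e : Sym2 W) : Sym2.map f.toHom (Sym2.map f.symm.toHom e) = e := by
  induction e using Sym2.ind with
  | _ a b => simp

lemma isMaximalMatching_map {M : G.Subgraph} (hM : IsMaximalMatching G M) :
    IsMaximalMatching H (M.map f.toHom) := by
  refine ⟨hM.1.map f.toHom f.injective, ?_⟩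
  intro N hN hsub
  have hNs : (N.map f.symm.toHom).IsMatching := hN.map f.symm.toHom f.symm.injective
  have key : M.edgeSet ⊆ (N.map f.symm.toHom).edgeSet := by
    intro e he
    rw [edgeSet_map]
    refine ⟨Sym2.map f.toHom e, hsub ?_, sym2_roundtrip f e⟩
    rw [edgeSet_map]
    exact ⟨e, he, rfl⟩
  have heq := hM.2 _ hNs key
  rw [edgeSet_map, heq, edgeSet_map]
  ext e
  constructor
  · rintro ⟨e', ⟨e'', he'', rfl⟩, rfl⟩
    rwa [sym2_roundtrip' f e'']
  · intro he
    exact ⟨Sym2.map f.symm.toHom e, ⟨e, he, rfl⟩, sym2_roundtrip' f e⟩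

lemma muStar_set_subset (f : G ≃g H) :
    {n | ∃ M : G.Subgraph, IsMaximalMatching G M ∧ M.edgeSet.ncard = n} ⊆
      {n | ∃ M : H.Subgraph, IsMaximalMatching H M ∧ M.edgeSet.ncard = n} := by
  rintro n ⟨M, hM, rfl⟩
  refine ⟨M.map f.toHom, isMaximalMatching_map f hM, ?_⟩
  rw [edgeSet_map]
  exact Set.ncard_image_of_injective _ (Sym2.map.injective f.injective)

lemma muStar_eq_iso (f : G ≃g H) : muStar G = muStar H := by
  unfold muStar
  congr 1
  exact Set.Subset.antisymm (muStar_set_subset f) (muStar_set_subset f.symm)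

end iso


/- ### kGraph computations -/

lemma kGraph_adj {n : ℕ} {a b : Fin n ⊕ Fin 2} :
    (kGraph n).Adj a b ↔ a ≠ b ∧ ¬(a.isLeft = true ∧ b.isLeft = true) := by
  simp only [kGraph, fromRel_adj]
  tauto

lemma kGraph_adj_lr {n : ℕ} (i : Fin n) (j : Fin 2) :
    (kGraph n).Adj (Sum.inl i) (Sum.inr j) := by
  rw [kGraph_adj]; simp

lemma kGraph_adj_rr {n : ℕ} :
    (kGraph n).Adj (Sum.inr 0 : Fin n ⊕ Fin 2) (Sum.inr 1) := by
  rw [kGraph_adj]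
  refine ⟨by simp [Fin.ext_iff], by simp⟩

lemma kGraph_nbr_inl {n : ℕ} (i : Fin n) :
    (kGraph n).neighborSet (Sum.inl i) = {Sum.inr 0, Sum.inr 1} := by
  ext w
  cases w with
  | inl j => simp [mem_neighborSet, kGraph_adj]
  | inr k =>
    fin_cases k <;> simp [mem_neighborSet, kGraph_adj_lr]

lemma minDeg_kGraph {n : ℕ} (hn : 1 ≤ n) : minDeg (kGraph n) = 2 := by
  have hi : (0 : ℕ) < n := hn
  apply sInf_eq_of
  · exact ⟨Sum.inl ⟨0, hi⟩, by
      rw [kGraph_nbr_inl]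
      exact Set.ncard_pair (by simp [Fin.ext_iff])⟩
  · rintro k ⟨x, rfl⟩
    cases x with
    | inl i =>
      exact two_le_ncard_of_mem (Set.toFinite _) (kGraph_adj_lr i 0) (kGraph_adj_lr i 1)
        (by simp [Fin.ext_iff])
    | inr j =>
      fin_cases j
      · exact two_le_ncard_of_mem (Set.toFinite _) ((kGraph_adj_lr ⟨0, hi⟩ 0).symm)
          kGraph_adj_rr (by simp)
      · exact two_le_ncard_of_mem (Set.toFinite _) ((kGraph_adj_lr ⟨0, hi⟩ 1).symm)
          kGraph_adj_rr.symm (by simp)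

lemma gammaT_kGraph {n : ℕ} : gammaT (kGraph n) = 2 := by
  apply sInf_eq_of
  · refine ⟨{Sum.inr 0, Sum.inr 1}, ?_, Set.ncard_pair (by simp [Fin.ext_iff])⟩
    intro w
    cases w with
    | inl i => exact ⟨Sum.inr 0, by simp, kGraph_adj_lr i 0⟩
    | inr j =>
      fin_cases j
      · exact ⟨Sum.inr 1, by simp, kGraph_adj_rr⟩
      · exact ⟨Sum.inr 0, by simp, kGraph_adj_rr.symm⟩
  · rintro k ⟨S, hS, rfl⟩
    exact two_le_ncard_totalDom hS

lemma muStar_kGraph {n : ℕ} : muStar (kGraph n) = 1 := by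
  apply sInf_eq_of
  · refine ⟨(kGraph n).subgraphOfAdj kGraph_adj_rr,
      ⟨Subgraph.IsMatching.subgraphOfAdj _, ?_⟩, ?_⟩
    · intro N hN hsub
      apply Set.Subset.antisymm hsub
      have h01 : N.Adj (Sum.inr 0) (Sum.inr 1) := by
        rw [← Subgraph.mem_edgeSet]
        exact hsub (by rw [edgeSet_subgraphOfAdj]; rfl)
      intro e he
      induction e using Sym2.ind with
      | _ a b =>
        have hab : N.Adj a b := Subgraph.mem_edgeSet.mp he
        have hG := kGraph_adj.mp (N.adj_sub hab)
        rw [edgeSet_subgraphOfAdj]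
        cases a with
        | inl i =>
          cases b with
          | inl i' => exact absurd ⟨rfl, rfl⟩ hG.2
          | inr j =>
            exfalso
            fin_cases j
            · exact absurd (matching_unique hN hab.symm h01) (by simp)
            · exact absurd (matching_unique hN hab.symm h01.symm) (by simp)
        | inr j =>
          cases b with
          | inl i' =>
            exfalso
            fin_cases j
            · exact absurd (matching_unique hN hab h01) (by simp)
            · exact absurd (matching_unique hN hab h01.symm) (by simp)
          | inr j' =>
            fin_cases j <;> fin_cases j'
            · exact absurd rfl hG.1
            · rfl
            · exact Sym2.eq_swap
            · exact absurd rfl hG.1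
    · rw [edgeSet_subgraphOfAdj]; exact Set.ncard_singleton _
  · rintro k ⟨M, hM, rfl⟩
    rcases Nat.eq_zero_or_pos M.edgeSet.ncard with h0 | h1
    · exfalso
      rw [Set.ncard_eq_zero (Set.toFinite _)] at h0
      have := hM.2 ((kGraph n).subgraphOfAdj kGraph_adj_rr)
        (Subgraph.IsMatching.subgraphOfAdj _) (by rw [h0]; exact Set.empty_subset _)
      rw [h0, edgeSet_subgraphOfAdj] at this
      exact absurd this.symm (Set.singleton_ne_empty _)
    · exact h1

/- ### C6 computations -/

lemma c6_adj : ∀ v w : Fin 6, (cycleGraph 6).Adj v w ↔ (w = v + 1 ∨ w = v - 1) := by decide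

lemma minDeg_c6 : minDeg (cycleGraph 6) = 2 := by
  have hne : ∀ v : Fin 6, v + 1 ≠ v - 1 := by decide
  have hnbr : ∀ v : Fin 6, (cycleGraph 6).neighborSet v = {v + 1, v - 1} := by
    intro v; ext w; simp [mem_neighborSet, c6_adj]
  have hcard : ∀ v : Fin 6, ((cycleGraph 6).neighborSet v).ncard = 2 := by
    intro v; rw [hnbr]; exact Set.ncard_pair (hne v)
  apply sInf_eq_of
  · exact ⟨0, hcard 0⟩
  · rintro k ⟨v, rfl⟩; rw [hcard]

lemma gammaT_c6 : gammaT (cycleGraph 6) = 4 := by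
  apply sInf_eq_of
  · refine ⟨↑({0, 1, 3, 4} : Finset (Fin 6)), ?_, by rw [Set.ncard_coe_finset]; rfl⟩
    intro v
    fin_cases v
    · exact ⟨1, by rw [Finset.mem_coe]; decide, by decide⟩
    · exact ⟨0, by rw [Finset.mem_coe]; decide, by decide⟩
    · exact ⟨1, by rw [Finset.mem_coe]; decide, by decide⟩
    · exact ⟨4, by rw [Finset.mem_coe]; decide, by decide⟩
    · exact ⟨3, by rw [Finset.mem_coe]; decide, by decide⟩
    · exact ⟨4, by rw [Finset.mem_coe]; decide, by decide⟩
  · rintro k ⟨S, hS, rfl⟩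
    have key : ∀ s : Finset (Fin 6),
        (∀ v : Fin 6, ∃ u ∈ s, (cycleGraph 6).Adj v u) → 4 ≤ s.card := by decide
    rw [Set.ncard_eq_toFinset_card S S.toFinite]
    apply key
    intro v
    obtain ⟨u, hu, hadj⟩ := hS v
    exact ⟨u, (Set.Finite.mem_toFinset _).mpr hu, hadj⟩

lemma muStar_c6 : muStar (cycleGraph 6) = 2 := by
  have h01 : (cycleGraph 6).Adj 0 1 := by decide
  have h34 : (cycleGraph 6).Adj 3 4 := by decide
  have hedge : ((cycleGraph 6).subgraphOfAdj h01 ⊔ (cycleGraph 6).subgraphOfAdj h34).edgeSet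
      = {s((0 : Fin 6), 1), s((3 : Fin 6), 4)} := by
    rw [Subgraph.edgeSet_sup, edgeSet_subgraphOfAdj, edgeSet_subgraphOfAdj,
      Set.singleton_union]
  have hpairne : s((0 : Fin 6), 1) ≠ s((3 : Fin 6), 4) := by
    intro hcontra
    rw [Sym2.eq_iff] at hcontra
    revert hcontra; decide
  apply sInf_eq_of
  · refine ⟨_, ⟨sup_matching h01 h34 (by decide) (by decide) (by decide) (by decide), ?_⟩, ?_⟩
    · intro N hN hsub
      have hN01 : N.Adj 0 1 := Subgraph.mem_edgeSet.mp (hsub (by rw [hedge]; exact Or.inl rfl))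
      have hN34 : N.Adj 3 4 := Subgraph.mem_edgeSet.mp (hsub (by rw [hedge]; exact Or.inr rfl))
      apply Set.Subset.antisymm hsub
      intro e he
      induction e using Sym2.ind with
      | _ a b =>
        have hab : N.Adj a b := Subgraph.mem_edgeSet.mp he
        have claim : ∀ a b : Fin 6, (cycleGraph 6).Adj a b →
            (a=0∧b=1)∨(a=1∧b=0)∨(a=3∧b=4)∨(a=4∧b=3)∨(a=1∧b=2)∨(a=2∧b=1)∨(a=2∧b=3)∨
            (a=3∧b=2)∨(a=4∧b=5)∨(a=5∧b=4)∨(a=5∧b=0)∨(a=0∧b=5) := by decide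
        rw [hedge]
        rcases claim a b (N.adj_sub hab) with ⟨rfl, rfl⟩ | ⟨rfl, rfl⟩ | ⟨rfl, rfl⟩ |
          ⟨rfl, rfl⟩ | ⟨rfl, rfl⟩ | ⟨rfl, rfl⟩ | ⟨rfl, rfl⟩ | ⟨rfl, rfl⟩ | ⟨rfl, rfl⟩ |
          ⟨rfl, rfl⟩ | ⟨rfl, rfl⟩ | ⟨rfl, rfl⟩
        · exact Or.inl rfl
        · exact Or.inl Sym2.eq_swap
        · exact Or.inr rfl
        · exact Or.inr Sym2.eq_swap
        · exact absurd (matching_unique hN hab hN01.symm) (by decide)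
        · exact absurd (matching_unique hN hab.symm hN01.symm) (by decide)
        · exact absurd (matching_unique hN hab.symm hN34) (by decide)
        · exact absurd (matching_unique hN hab hN34) (by decide)
        · exact absurd (matching_unique hN hab hN34.symm) (by decide)
        · exact absurd (matching_unique hN hab.symm hN34.symm) (by decide)
        · exact absurd (matching_unique hN hab.symm hN01) (by decide)
        · exact absurd (matching_unique hN hab hN01) (by decide)
    · rw [hedge]
      exact Set.ncard_pair hpairne
  · rintro k ⟨M, hM, rfl⟩
    by_contra hlt
    push_neg at hlt
    have hlt' : M.edgeSet.ncard = 0 ∨ M.edgeSet.ncard = 1 := by omega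
    rcases hlt' with h0 | h1
    · rw [Set.ncard_eq_zero (Set.toFinite _)] at h0
      have := hM.2 ((cycleGraph 6).subgraphOfAdj h01)
        (Subgraph.IsMatching.subgraphOfAdj _) (by rw [h0]; exact Set.empty_subset _)
      rw [h0, edgeSet_subgraphOfAdj] at this
      exact absurd this.symm (Set.singleton_ne_empty _)
    · obtain ⟨e, he⟩ := Set.ncard_eq_one.mp h1
      revert he
      induction e using Sym2.ind with
      | _ a b =>
        intro he
        have heM : s(a, b) ∈ M.edgeSet := by rw [he]; rfl
        have hGab : (cycleGraph 6).Adj a b := M.adj_sub (Subgraph.mem_edgeSet.mp heM)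
        have claim2 : ∀ a b : Fin 6, (cycleGraph 6).Adj a b → ∃ c d : Fin 6,
            (cycleGraph 6).Adj c d ∧ c ≠ a ∧ c ≠ b ∧ d ≠ a ∧ d ≠ b := by decide
        obtain ⟨c, d, hcd, hca, hcb, hda, hdb⟩ := claim2 a b hGab
        have hM' := sup_matching hGab hcd hca hcb hda hdb
        have hsub : M.edgeSet ⊆
            ((cycleGraph 6).subgraphOfAdj hGab ⊔ (cycleGraph 6).subgraphOfAdj hcd).edgeSet := by
          intro x hx
          rw [he, Set.mem_singleton_iff] at hx
          subst hx
          rw [Subgraph.edgeSet_sup, edgeSet_subgraphOfAdj, edgeSet_subgraphOfAdj]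
          exact Or.inl rfl
        have heq := hM.2 _ hM' hsub
        have hmem : s(c, d) ∈ M.edgeSet := by
          rw [heq, Subgraph.edgeSet_sup, edgeSet_subgraphOfAdj, edgeSet_subgraphOfAdj]
          exact Or.inr rfl
        rw [he, Set.mem_singleton_iff, Sym2.eq_iff] at hmem
        rcases hmem with ⟨hc, hd⟩ | ⟨hc, hd⟩
        · exact hca hc
        · exact hcb hc

/-- If `G` belongs to the family `𝒦` or is a 6-cycle, then `δ(G) = 2` and
`γ_t(G) = 2 μ*(G)`. -/
theorem statement13 [Fintype V] (G : SimpleGraph V)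
    (h : InK G ∨ IsC6 G) :
    minDeg G = 2 ∧ gammaT G = 2 * muStar G := by
  rcases h with ⟨n, hn, hf⟩ | hf
  all_goals obtain ⟨f⟩ := hf
  · rw [minDeg_eq_iso f, gammaT_eq_iso f, muStar_eq_iso f,
      minDeg_kGraph hn, gammaT_kGraph, muStar_kGraph]
    exact ⟨rfl, rfl⟩
  · rw [minDeg_eq_iso f, gammaT_eq_iso f, muStar_eq_iso f, minDeg_c6, gammaT_c6, muStar_c6]
    exact ⟨rfl, rfl⟩


end TotalDomMM
end
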